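/- arXiv:2110.08929 — 10 statements merged into one kernel-verified Lean document; each statement's English description precedes it below -/
import Mathlib

section
/- A disjoint union ∐_{s∈S} X_s of a family {(X_s,d_s)}_{s∈S} of metric spaces equipped with a metric d whose restriction to each X_s equals d_s is a coarse disjoint union of the family if and only if the following two conditions hold: (i) for every sequence {x_n}_{n≥1} of points of ∐_{s∈S} X_s belonging to pairwise different parts X_s one has d(a, x_n) → ∞ for every point a of the union; and (ii) for every M > 0 and every sequence of pairs (x_n, y_n), n ≥ 1, of points of ∐_{s∈S} X_s with d(x_n, y_n) < M for all n and d(a, x_n) → ∞ for some point a, there is k ≥ 1 such that for each n ≥ k there is an index s ∈ S with x_n, y_n ∈ X_s. -/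
/-! Given a coarse disjoint union and `M > 0`, the exceptional sets `B s` together form a bounded
subset of `Σ s, X s`; a sequence diverging to infinity eventually leaves it, after which pairs at
distance `< M` cannot straddle two parts, and injectivity in the parts forces a sequence into
parts with `B s = ∅`, where its points are pairwise far apart. Conversely, take for `B s` the
points of `X s` within `M` of another part: condition (ii) makes their union bounded, and
condition (i) then lets it meet only finitely many parts. -/

/-- A metric space structure on the disjoint union `Σ s, X s` is a *coarse disjoint union*
of the family `{(X s, d_s)}` if its distance restricts to the distance of each part, and
for every `M > 0` there are bounded subsets `B s ⊆ X s`, all but finitely many of them empty,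
such that points of distinct parts lying outside the `B s` are at distance `> M`. -/
def IsCoarseDisjointUnion {S : Type*} (X : S → Type*) [∀ s, MetricSpace (X s)]
    [MetricSpace (Σ s, X s)] : Prop :=
  (∀ (s : S) (x y : X s), dist (⟨s, x⟩ : Σ s, X s) ⟨s, y⟩ = dist x y) ∧
  ∀ M : ℝ, M > 0 → ∃ B : ∀ s, Set (X s),
    (∀ s, Bornology.IsBounded (B s)) ∧
    {s | B s ≠ ∅}.Finite ∧
    ∀ (s t : S) (x : X s) (y : X t), s ≠ t → x ∉ B s → y ∉ B t →
      dist (⟨s, x⟩ : Σ s, X s) ⟨t, y⟩ > M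

open Filter Metric Bornology Function

section Pseudo

variable {S : Type*} {X : S → Type*} [PseudoMetricSpace (Σ s, X s)]

variable (X) in
def nearOtherParts (M : ℝ) : Set (Σ s, X s) :=
  {z | ∃ w : Σ s, X s, w.1 ≠ z.1 ∧ dist z w ≤ M}

theorem isBounded_nearOtherParts {M : ℝ}
    (h : ∀ x y : ℕ → Σ s, X s, (∀ n, dist (x n) (y n) ≤ M) → ∀ a,
      Tendsto (fun n => dist a (x n)) atTop atTop → ∃ n, (x n).1 = (y n).1) :
    IsBounded (nearOtherParts X M) := by
  rcases (nearOtherParts X M).eq_empty_or_nonempty with hN | ⟨c, -⟩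
  · exact hN ▸ isBounded_empty
  by_contra hunb
  have hfar : ∀ n : ℕ, ∃ z ∈ nearOtherParts X M, (n : ℝ) < dist c z := by
    by_contra! hle
    obtain ⟨n, hn⟩ := hle
    exact hunb (isBounded_closedBall.subset fun z hz => mem_closedBall'.2 (hn z hz))
  choose z hzN hz using hfar
  choose w hw hzw using hzN
  have htend : Tendsto (fun n => dist c (z n)) atTop atTop :=
    tendsto_atTop_mono (fun n => (hz n).le) tendsto_natCast_atTop_atTop
  obtain ⟨n, hn⟩ := h z w hzw c htend
  exact hw n hn.symm

theorem finite_fst_image_of_isBounded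
    (h : ∀ x : ℕ → Σ s, X s, Injective (fun n => (x n).1) → ∀ a,
      Tendsto (fun n => dist a (x n)) atTop atTop)
    {T : Set (Σ s, X s)} (hT : IsBounded T) : (Sigma.fst '' T).Finite := by
  by_contra hinf
  let e := Set.Infinite.natEmbedding _ hinf
  have hmem : ∀ n, ∃ z ∈ T, z.1 = e n := fun n => (e n).2
  choose z hzT hz using hmem
  have hinj : Injective fun n => (z n).1 := fun m n hmn =>
    e.injective (Subtype.ext (by simpa only [hz] using hmn))
  obtain ⟨C, hC⟩ := isBounded_iff.1 hT
  obtain ⟨n, hn⟩ := ((h z hinj (z 0)).eventually_gt_atTop C).exists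
  exact (hC (hzT 0) (hzT n)).not_gt hn

end Pseudo

section

variable {S : Type*} {X : S → Type*} [∀ s, MetricSpace (X s)] [MetricSpace (Σ s, X s)]

theorem isBounded_setOf_snd_mem
    (hres : ∀ (s : S) (x y : X s), dist (⟨s, x⟩ : Σ s, X s) ⟨s, y⟩ = dist x y)
    {B : ∀ s, Set (X s)} (hB : ∀ s, IsBounded (B s)) (hfin : {s | B s ≠ ∅}.Finite) :
    IsBounded {z : Σ s, X s | z.2 ∈ B z.1} := by
  refine ((isBounded_biUnion hfin).2 fun s _ =>
    (Isometry.of_dist_eq (hres s)).lipschitz.isBounded_image (hB s)).subset ?_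
  rintro ⟨s, x⟩ hx
  exact Set.mem_biUnion (Set.nonempty_iff_ne_empty.1 ⟨x, hx⟩) ⟨x, hx, rfl⟩

namespace IsCoarseDisjointUnion

theorem tendsto_dist_atTop (h : IsCoarseDisjointUnion X) {x : ℕ → Σ s, X s}
    (hx : Injective fun n => (x n).1) (a : Σ s, X s) :
    Tendsto (fun n => dist a (x n)) atTop atTop := by
  rw [← Nat.cofinite_eq_atTop, Filter.tendsto_atTop]
  intro C
  obtain ⟨B, -, hfin, hsep⟩ := h.2 (max (2 * C) 1) (lt_max_of_lt_right one_pos)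
  have hnear : {n | dist a (x n) < C ∧ B (x n).1 = ∅}.Subsingleton := by
    rintro m ⟨hm, hBm⟩ n ⟨hn, hBn⟩
    by_contra hmn
    have hfar := hsep _ _ (x m).2 (x n).2 (hx.ne hmn) (by simp [hBm]) (by simp [hBn])
    have := dist_triangle_left (x m) (x n) a
    linarith [le_max_left (2 * C) 1]
  refine eventually_cofinite.2 ((hfin.preimage hx.injOn |>.union hnear.finite).subset ?_)
  intro n hn
  by_cases hBn : B (x n).1 = ∅
  · exact Or.inr ⟨not_le.1 hn, hBn⟩
  · exact Or.inl hBn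

theorem eventually_fst_eq (h : IsCoarseDisjointUnion X) {ι : Type*} {l : Filter ι}
    {M : ℝ} (hM : 0 < M) {x y : ι → Σ s, X s} (hxy : ∀ᶠ n in l, dist (x n) (y n) < M)
    {a : Σ s, X s} (ha : Tendsto (fun n => dist a (x n)) l atTop) :
    ∀ᶠ n in l, (x n).1 = (y n).1 := by
  obtain ⟨B, hB, hfin, hsep⟩ := h.2 M hM
  obtain ⟨R, hR⟩ :=
    (isBounded_iff_subset_closedBall a).1 (isBounded_setOf_snd_mem h.1 hB hfin)
  filter_upwards [ha.eventually_gt_atTop (R + M), hxy] with n hfar hclose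
  by_contra hne
  have hx : (x n).2 ∉ B (x n).1 := fun hx => by
    linarith [mem_closedBall'.1 (hR hx)]
  have hy : (y n).2 ∉ B (y n).1 := fun hy => by
    linarith [mem_closedBall'.1 (hR hy), dist_triangle_right a (x n) (y n)]
  exact (hsep _ _ _ _ hne hx hy).not_gt hclose

end IsCoarseDisjointUnion

theorem isCoarseDisjointUnion_of_nearOtherParts
    (hres : ∀ (s : S) (x y : X s), dist (⟨s, x⟩ : Σ s, X s) ⟨s, y⟩ = dist x y)
    (hN : ∀ M > 0, IsBounded (nearOtherParts X M) ∧ (Sigma.fst '' nearOtherParts X M).Finite) :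
    IsCoarseDisjointUnion X := by
  refine ⟨hres, fun M hM => ⟨fun s => Sigma.mk s ⁻¹' nearOtherParts X M, fun s => ?_, ?_, ?_⟩⟩
  · exact (Isometry.of_dist_eq (hres s)).antilipschitz.isBounded_preimage (hN M hM).1
  · refine (hN M hM).2.subset fun s hs => ?_
    obtain ⟨x, hx⟩ := Set.nonempty_iff_ne_empty.2 hs
    exact ⟨⟨s, x⟩, hx, rfl⟩
  · intro s t x y hst hx _
    by_contra! hle
    exact hx ⟨⟨t, y⟩, hst.symm, hle⟩

end

/-- Proposition 3.4: a disjoint union `Σ s, X s` equipped with a metric restricting to each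
`d_s` is a coarse disjoint union if and only if (i) every sequence of points lying in pairwise
different parts diverges to infinity, and (ii) for every `M > 0`, any sequence of pairs at
distance `< M` whose first coordinates diverge to infinity eventually has both members of each
pair in a common part. -/
theorem coarseDisjointUnion_iff {S : Type*} (X : S → Type*) [∀ s, MetricSpace (X s)]
    [MetricSpace (Σ s, X s)]
    (hres : ∀ (s : S) (x y : X s), dist (⟨s, x⟩ : Σ s, X s) ⟨s, y⟩ = dist x y) :
    IsCoarseDisjointUnion X ↔
      ((∀ x : ℕ → Σ s, X s, Function.Injective (fun n => (x n).1) →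
          ∀ a : Σ s, X s,
            Filter.Tendsto (fun n => dist a (x n)) Filter.atTop Filter.atTop) ∧
        (∀ M : ℝ, M > 0 → ∀ x y : ℕ → Σ s, X s,
          (∀ n, dist (x n) (y n) < M) →
          (∃ a : Σ s, X s,
            Filter.Tendsto (fun n => dist a (x n)) Filter.atTop Filter.atTop) →
          ∃ k : ℕ, ∀ n ≥ k, (x n).1 = (y n).1)) := by
  constructor
  · intro h
    exact ⟨fun x hx a => h.tendsto_dist_atTop hx a, fun M hM x y hxy ⟨a, ha⟩ =>
      eventually_atTop.1 (h.eventually_fst_eq hM (.of_forall hxy) ha)⟩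
  · rintro ⟨hdiv, hpairs⟩
    refine isCoarseDisjointUnion_of_nearOtherParts hres fun M hM => ?_
    have hbdd : IsBounded (nearOtherParts X M) :=
      isBounded_nearOtherParts fun x y hxy a ha => by
        obtain ⟨k, hk⟩ := hpairs (M + 1) (by linarith) x y
          (fun n => (hxy n).trans_lt (lt_add_one M)) ⟨a, ha⟩
        exact ⟨k, hk k le_rfl⟩
    exact ⟨hbdd, finite_fst_image_of_isBounded hdiv hbdd⟩
end

section
/- If S is a countable set, then every family {(X_s, d_s)}_{s∈S} of metric spaces admits a coarse disjoint union, i.e., there exists a metric d on the disjoint union ∐_{s∈S} X_s making it a coarse disjoint union of the family. Moreover, if every d_s is an ultrametric (respectively, an ultrametric taking only non-negative integer values), then d can be chosen to be an ultrametric (respectively, an ultrametric taking only non-negative integer values). -/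
/-- The distance of a metric space is an ultrametric. -/
def IsUltra (X : Type*) [MetricSpace X] : Prop :=
  ∀ x y z : X, dist x z ≤ max (dist x y) (dist y z)

/-- All distances of the metric space are non-negative integers. -/
def IsIntegralDist (X : Type*) [MetricSpace X] : Prop :=
  ∀ x y : X, ∃ n : ℕ, dist x y = n



section Aux
variable {S : Type*} {X : S → Type*} [∀ s, MetricSpace (X s)]

noncomputable def bpt (s : S) (x : X s) : X s := Classical.choice ⟨x⟩

lemma bpt_const (s : S) (x y : X s) : bpt s x = bpt s y :=
  congrArg Classical.choice (Subsingleton.elim _ _)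

noncomputable def nm (s : S) (x : X s) : ℝ := dist x (bpt s x)

lemma nm_nonneg (s : S) (x : X s) : 0 ≤ nm s x := dist_nonneg

lemma nm_triangle (s : S) (x y : X s) : nm s x ≤ dist x y + nm s y := by
  unfold nm; rw [bpt_const s x y]; exact dist_triangle _ _ _

lemma dist_le_nm (s : S) (x z : X s) : dist x z ≤ nm s x + nm s z := by
  unfold nm
  rw [bpt_const s x z]
  calc dist x z ≤ dist x (bpt s z) + dist (bpt s z) z := dist_triangle _ _ _
    _ = dist x (bpt s z) + dist z (bpt s z) := by rw [dist_comm (bpt s z)]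

open Classical in
noncomputable def D (f : S → ℕ) (a b : Σ s, X s) : ℝ :=
  if h : a.1 = b.1 then dist (h ▸ a.2) b.2
  else max (nm a.1 a.2) (max (nm b.1 b.2) ((max (f a.1) (f b.1) : ℕ) + 1))

lemma D_same (f : S → ℕ) (s : S) (x y : X s) :
    D f ⟨s, x⟩ ⟨s, y⟩ = dist x y := by simp [D]

lemma D_ne (f : S → ℕ) {s t : S} (h : s ≠ t) (x : X s) (y : X t) :
    D f ⟨s, x⟩ ⟨t, y⟩ =
      max (nm s x) (max (nm t y) ((max (f s) (f t) : ℕ) + 1)) := by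
  simp [D, h]

end Aux

section Aux2
set_option linter.unusedSectionVars false
variable {S : Type*} {X : S → Type*} [∀ s, MetricSpace (X s)]

lemma max_le_add {a b c d : ℝ} (h1 : a ≤ c) (h2 : b ≤ d) (hc : 0 ≤ c) (hd : 0 ≤ d) :
    max a b ≤ c + d := max_le (by linarith) (by linarith)

lemma D_self (f : S → ℕ) (a : Σ s, X s) : D f a a = 0 := by
  obtain ⟨s, x⟩ := a; rw [D_same]; exact dist_self x

lemma D_comm (f : S → ℕ) (a b : Σ s, X s) : D f a b = D f b a := by
  obtain ⟨s, x⟩ := a; obtain ⟨t, y⟩ := b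
  by_cases h : s = t
  · subst h; rw [D_same, D_same, dist_comm]
  · rw [D_ne f h, D_ne f (Ne.symm h), Nat.max_comm (f t) (f s)]
    exact max_left_comm _ _ _

lemma D_triangle (f : S → ℕ) (a b c : Σ s, X s) :
    D f a c ≤ D f a b + D f b c := by
  obtain ⟨s, x⟩ := a; obtain ⟨t, y⟩ := b; obtain ⟨u, z⟩ := c
  by_cases hst : s = t
  · subst hst
    by_cases hsu : s = u
    · subst hsu; rw [D_same, D_same, D_same]; exact dist_triangle x y z
    · rw [D_same, D_ne f hsu, D_ne f hsu]
      have h1 := nm_triangle s x y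
      have h2 : (0:ℝ) ≤ dist x y := dist_nonneg
      refine max_le ?_ ?_
      · calc nm s x ≤ dist x y + nm s y := h1
          _ ≤ dist x y + max (nm s y) (max (nm u z) ((max (f s) (f u) : ℕ) + 1)) := by
              gcongr; exact le_max_left _ _
      · calc max (nm u z) ((max (f s) (f u) : ℕ) + 1)
            ≤ max (nm s y) (max (nm u z) ((max (f s) (f u) : ℕ) + 1)) := le_max_right _ _
          _ ≤ dist x y + _ := le_add_of_nonneg_left h2
  · by_cases htu : t = u
    · subst htu
      rw [D_ne f hst, D_ne f hst, D_same]
      have h1 := nm_triangle t z y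
      have h2 : (0:ℝ) ≤ dist y z := dist_nonneg
      have hA : nm s x ≤ max (nm s x) (max (nm t y) ((max (f s) (f t) : ℕ) + 1)) :=
        le_max_left _ _
      have hB : nm t y ≤ max (nm s x) (max (nm t y) ((max (f s) (f t) : ℕ) + 1)) :=
        le_max_of_le_right (le_max_left _ _)
      have hC : ((max (f s) (f t) : ℕ) + 1 : ℝ) ≤
          max (nm s x) (max (nm t y) ((max (f s) (f t) : ℕ) + 1)) :=
        le_max_of_le_right (le_max_right _ _)
      rw [dist_comm z y] at h1
      refine max_le (by linarith) (max_le (by linarith) (by linarith))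
    · by_cases hsu : s = u
      · subst hsu
        rw [D_same, D_ne f hst, D_ne f (Ne.symm hst)]
        have h1 := dist_le_nm s x z
        have hA : nm s x ≤ max (nm s x) (max (nm t y) ((max (f s) (f t) : ℕ) + 1)) :=
          le_max_left _ _
        have hB : nm s z ≤ max (nm t y) (max (nm s z) ((max (f t) (f s) : ℕ) + 1)) :=
          le_max_of_le_right (le_max_left _ _)
        linarith
      · rw [D_ne f hsu, D_ne f hst, D_ne f htu]
        have hA : nm s x ≤ max (nm s x) (max (nm t y) ((max (f s) (f t) : ℕ) + 1)) :=
          le_max_left _ _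
        have hB : nm u z ≤ max (nm t y) (max (nm u z) ((max (f t) (f u) : ℕ) + 1)) :=
          le_max_of_le_right (le_max_left _ _)
        have hnn1 : (0:ℝ) ≤ max (nm s x) (max (nm t y) ((max (f s) (f t) : ℕ) + 1)) :=
          le_trans (nm_nonneg s x) hA
        have hnn2 : (0:ℝ) ≤ max (nm t y) (max (nm u z) ((max (f t) (f u) : ℕ) + 1)) :=
          le_trans (nm_nonneg u z) hB
        have hr : ((max (f s) (f u) : ℕ) : ℝ) + 1 ≤
            max (nm s x) (max (nm t y) ((max (f s) (f t) : ℕ) + 1)) +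
            max (nm t y) (max (nm u z) ((max (f t) (f u) : ℕ) + 1)) := by
          have hcase : max (f s) (f u) ≤ max (f s) (f t) ∨
              max (f s) (f u) ≤ max (f t) (f u) := by omega
          rcases hcase with h | h
          · have : ((max (f s) (f u) : ℕ) : ℝ) + 1 ≤ ((max (f s) (f t) : ℕ) : ℝ) + 1 := by
              exact_mod_cast Nat.succ_le_succ h
            have h2 : ((max (f s) (f t) : ℕ) : ℝ) + 1 ≤
                max (nm s x) (max (nm t y) ((max (f s) (f t) : ℕ) + 1)) :=
              le_max_of_le_right (le_max_right _ _)
            linarith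
          · have : ((max (f s) (f u) : ℕ) : ℝ) + 1 ≤ ((max (f t) (f u) : ℕ) : ℝ) + 1 := by
              exact_mod_cast Nat.succ_le_succ h
            have h2 : ((max (f t) (f u) : ℕ) : ℝ) + 1 ≤
                max (nm t y) (max (nm u z) ((max (f t) (f u) : ℕ) + 1)) :=
              le_max_of_le_right (le_max_right _ _)
            linarith
        refine max_le (by linarith) (max_le (by linarith) hr)

lemma D_eq_zero (f : S → ℕ) (a b : Σ s, X s) (h : D f a b = 0) : a = b := by
  obtain ⟨s, x⟩ := a; obtain ⟨t, y⟩ := b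
  by_cases hst : s = t
  · subst hst
    rw [D_same] at h
    exact congrArg _ (eq_of_dist_eq_zero h)
  · exfalso
    rw [D_ne f hst] at h
    have : ((max (f s) (f t) : ℕ) : ℝ) + 1 ≤ 0 :=
      h ▸ le_max_of_le_right (le_max_right _ _)
    have : (0:ℝ) ≤ (max (f s) (f t) : ℕ) := Nat.cast_nonneg _
    linarith

end Aux2

section Aux3
set_option linter.unusedSectionVars false
variable {S : Type*} {X : S → Type*} [∀ s, MetricSpace (X s)]

lemma nm_ultra {s : S} (hU : ∀ x y z : X s, dist x z ≤ max (dist x y) (dist y z))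
    (x y : X s) : nm s x ≤ max (dist x y) (nm s y) := by
  unfold nm; rw [bpt_const s x y]; exact hU x y _

lemma dist_le_nm_ultra {s : S} (hU : ∀ x y z : X s, dist x z ≤ max (dist x y) (dist y z))
    (x z : X s) : dist x z ≤ max (nm s x) (nm s z) := by
  unfold nm
  rw [bpt_const s x z]
  calc dist x z ≤ max (dist x (bpt s z)) (dist (bpt s z) z) := hU x _ z
    _ = max (dist x (bpt s z)) (dist z (bpt s z)) := by rw [dist_comm (bpt s z)]

lemma D_ultra (f : S → ℕ)
    (hU : ∀ s, ∀ x y z : X s, dist x z ≤ max (dist x y) (dist y z))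
    (a b c : Σ s, X s) : D f a c ≤ max (D f a b) (D f b c) := by
  obtain ⟨s, x⟩ := a; obtain ⟨t, y⟩ := b; obtain ⟨u, z⟩ := c
  by_cases hst : s = t
  · subst hst
    by_cases hsu : s = u
    · subst hsu; rw [D_same, D_same, D_same]; exact hU s x y z
    · rw [D_same, D_ne f hsu, D_ne f hsu]
      have h1 := nm_ultra (hU s) x y
      refine max_le ?_ ?_
      · rcases max_cases (dist x y) (nm s y) with ⟨he, _⟩ | ⟨he, _⟩ <;> rw [he] at h1
        · exact le_max_of_le_left h1
        · exact le_max_of_le_right (h1.trans (le_max_left _ _))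
      · exact le_max_of_le_right (le_max_right _ _)
  · by_cases htu : t = u
    · subst htu
      rw [D_ne f hst, D_ne f hst, D_same]
      have h1 := nm_ultra (hU t) z y
      rw [dist_comm z y] at h1
      refine max_le (le_max_of_le_left (le_max_left _ _)) (max_le ?_ ?_)
      · rcases max_cases (dist y z) (nm t y) with ⟨he, _⟩ | ⟨he, _⟩ <;> rw [he] at h1
        · exact le_max_of_le_right h1
        · exact le_max_of_le_left (le_max_of_le_right (h1.trans (le_max_left _ _)))
      · exact le_max_of_le_left (le_max_of_le_right (le_max_right _ _))
    · by_cases hsu : s = u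
      · subst hsu
        rw [D_same, D_ne f hst, D_ne f (Ne.symm hst)]
        have h1 := dist_le_nm_ultra (hU s) x z
        refine h1.trans (max_le ?_ ?_)
        · exact le_max_of_le_left (le_max_left _ _)
        · exact le_max_of_le_right (le_max_of_le_right (le_max_left _ _))
      · rw [D_ne f hsu, D_ne f hst, D_ne f htu]
        refine max_le (le_max_of_le_left (le_max_left _ _)) (max_le ?_ ?_)
        · exact le_max_of_le_right (le_max_of_le_right (le_max_left _ _))
        · have hcase : max (f s) (f u) ≤ max (f s) (f t) ∨
              max (f s) (f u) ≤ max (f t) (f u) := by omega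
          rcases hcase with h | h
          · refine le_max_of_le_left (le_max_of_le_right (le_max_of_le_right ?_))
            exact_mod_cast Nat.succ_le_succ h
          · refine le_max_of_le_right (le_max_of_le_right (le_max_of_le_right ?_))
            exact_mod_cast Nat.succ_le_succ h

noncomputable def cduMetric (f : S → ℕ) : MetricSpace (Σ s, X s) where
  dist := D f
  dist_self := D_self f
  dist_comm := D_comm f
  dist_triangle := D_triangle f
  eq_of_dist_eq_zero := D_eq_zero f _ _
  edist_dist := fun _ _ => rfl

end Aux3

section Aux4
set_option linter.unusedSectionVars false
variable {S : Type*} {X : S → Type*} [∀ s, MetricSpace (X s)]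

lemma cdu_isCoarse (f : S → ℕ) (hf : Function.Injective f) :
    @IsCoarseDisjointUnion S X _ (cduMetric f) := by
  constructor
  · exact fun s x y => D_same f s x y
  · intro M hM
    refine ⟨fun s => {x | nm s x ≤ M ∧ (f s : ℝ) ≤ M}, ?_, ?_, ?_⟩
    · intro s
      rw [Metric.isBounded_iff]
      refine ⟨M + M, fun x hx y hy => ?_⟩
      exact (dist_le_nm s x y).trans (add_le_add hx.1 hy.1)
    · have hsub : {s | {x : X s | nm s x ≤ M ∧ (f s : ℝ) ≤ M} ≠ ∅} ⊆ f ⁻¹' {n | (n : ℝ) ≤ M} := by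
        intro s hs
        obtain ⟨x, hx⟩ := Set.nonempty_iff_ne_empty.2 hs
        exact hx.2
      refine Set.Finite.subset (Set.Finite.preimage hf.injOn ?_) hsub
      refine (Set.finite_Iic (Nat.floor M)).subset fun n hn => ?_
      exact Nat.le_floor hn
    · intro s t x y hst hx hy
      show M < D f (⟨s, x⟩ : Σ s, X s) ⟨t, y⟩
      rw [D_ne f hst]
      simp only [Set.mem_setOf_eq, not_and_or, not_le] at hx
      rcases hx with h | h
      · exact lt_of_lt_of_le h (le_max_left _ _)
      · have h1 : ((f s : ℕ) : ℝ) ≤ ((max (f s) (f t) : ℕ) : ℝ) := by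
          exact_mod_cast le_max_left _ _
        have : M < ((max (f s) (f t) : ℕ) : ℝ) + 1 := by linarith
        exact lt_of_lt_of_le this (le_max_of_le_right (le_max_right _ _))

lemma D_integral (f : S → ℕ) (hInt : ∀ s, ∀ x y : X s, ∃ n : ℕ, dist x y = n)
    (a b : Σ s, X s) : ∃ n : ℕ, D f a b = n := by
  obtain ⟨s, x⟩ := a; obtain ⟨t, y⟩ := b
  by_cases hst : s = t
  · subst hst; rw [D_same]; exact hInt s x y
  · rw [D_ne f hst]
    obtain ⟨n1, h1⟩ := hInt s x (bpt s x)
    obtain ⟨n2, h2⟩ := hInt t y (bpt t y)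
    refine ⟨max n1 (max n2 (max (f s) (f t) + 1)), ?_⟩
    rw [show nm s x = (n1 : ℝ) from h1, show nm t y = (n2 : ℝ) from h2]
    push_cast [Nat.cast_max]
    ring

end Aux4

/-- Corollary 3.10: any countably indexed family of metric spaces admits a coarse disjoint
union; moreover, if every part is an ultrametric space (respectively an integral ultrametric
space), the coarse disjoint union can be chosen to be an ultrametric space (respectively an
integral ultrametric space). -/
theorem exists_coarseDisjointUnion {S : Type*} [Countable S] (X : S → Type*)
    [∀ s, MetricSpace (X s)] :
    (∃ m : MetricSpace (Σ s, X s), @IsCoarseDisjointUnion S X _ m) ∧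
    ((∀ s, IsUltra (X s)) →
      ∃ m : MetricSpace (Σ s, X s),
        @IsCoarseDisjointUnion S X _ m ∧ @IsUltra (Σ s, X s) m) ∧
    ((∀ s, IsUltra (X s)) → (∀ s, IsIntegralDist (X s)) →
      ∃ m : MetricSpace (Σ s, X s),
        @IsCoarseDisjointUnion S X _ m ∧ @IsUltra (Σ s, X s) m ∧
          @IsIntegralDist (Σ s, X s) m) := by
  obtain ⟨f, hf⟩ := exists_injective_nat S
  exact ⟨⟨cduMetric f, cdu_isCoarse f hf⟩,
    fun hU => ⟨cduMetric f, cdu_isCoarse f hf, D_ultra f hU⟩,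
    fun hU hI => ⟨cduMetric f, cdu_isCoarse f hf, D_ultra f hU, D_integral f hI⟩⟩
end

section
/- Suppose (X, d) is an ultrametric space, x_0 ∈ X, and points x_n ∈ X \ {x_0}, n ≥ 1, are chosen so that the sequence r_n = d(x_n, x_0) is strictly increasing and diverges to infinity. Put X_1 = {x ∈ X : d(x, x_0) ≤ r_1} and X_n = {x ∈ X : d(x, x_0) = r_n} for n ≥ 2. If for every x ∈ X \ X_1 there is i ≥ 2 with d(x, x_0) = r_i, then (X, d) is a coarse disjoint union of the family {X_n}_{n≥1} of its bounded subsets, i.e., the metric d together with the partition X = ∪_{n≥1} X_n satisfies the coarse disjoint union conditions. -/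
/-- Isosceles-type lemma in ultrametric spaces. -/
lemma ultra_dist_ge {X : Type*} [MetricSpace X]
    (hultra : ∀ x y z : X, dist x z ≤ max (dist x y) (dist y z))
    (x₀ p q : X) (h : dist q x₀ < dist p x₀) : dist p x₀ ≤ dist p q := by
  have := hultra p q x₀
  rcases max_cases (dist p q) (dist q x₀) with ⟨he, _⟩ | ⟨he, _⟩
  · rw [he] at this; exact this
  · rw [he] at this; linarith

/-- Corollary 4.2: let `(X, d)` be an ultrametric space, `x₀ ∈ X`, and let `x n ≠ x₀` be
points whose distances `r n = d(x n, x₀)` form a strictly increasing sequence diverging to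
infinity.  Put `P 0 = {y | d(y, x₀) ≤ r 0}` and `P (n+1) = {y | d(y, x₀) = r (n+1)}`.
If every point outside `P 0` is at distance `r i` from `x₀` for some `i ≥ 1`, then `(X, d)`
is a coarse disjoint union of the family of its bounded subsets `P n`: the `P n` partition
`X`, each is bounded, and for every `M > 0` there are bounded subsets `B n ⊆ P n`, all but
finitely many empty, with points of distinct parts outside the `B n` at distance `> M`. -/
theorem ultrametric_coarseDisjointUnion_of_spheres {X : Type*} [MetricSpace X]
    (hultra : ∀ x y z : X, dist x z ≤ max (dist x y) (dist y z))
    (x₀ : X) (x : ℕ → X) (hx : ∀ n, x n ≠ x₀)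
    (r : ℕ → ℝ) (hr : ∀ n, r n = dist (x n) x₀)
    (hmono : StrictMono r) (hdiv : Filter.Tendsto r Filter.atTop Filter.atTop)
    (P : ℕ → Set X)
    (hP0 : P 0 = {y : X | dist y x₀ ≤ r 0})
    (hPn : ∀ n : ℕ, P (n + 1) = {y : X | dist y x₀ = r (n + 1)})
    (hcover : ∀ y : X, y ∉ P 0 → ∃ i ≥ 1, dist y x₀ = r i) :
    (Set.univ = ⋃ n, P n) ∧
    (Pairwise fun m n => Disjoint (P m) (P n)) ∧
    (∀ n, Bornology.IsBounded (P n)) ∧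
    (∀ M : ℝ, M > 0 → ∃ B : ℕ → Set X,
      (∀ n, B n ⊆ P n ∧ Bornology.IsBounded (B n)) ∧
      {n | B n ≠ ∅}.Finite ∧
      ∀ m n : ℕ, m ≠ n → ∀ p ∈ P m \ B m, ∀ q ∈ P n \ B n, dist p q > M) := by
  refine ⟨?_, ?_, ?_, ?_⟩
  · ext y
    simp only [Set.mem_univ, Set.mem_iUnion, true_iff]
    by_cases h : y ∈ P 0
    · exact ⟨0, h⟩
    · obtain ⟨i, hi, hd⟩ := hcover y h
      obtain ⟨j, rfl⟩ : ∃ j, i = j + 1 := ⟨i - 1, (Nat.succ_pred_eq_of_pos hi).symm⟩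
      exact ⟨j + 1, by rw [hPn]; exact hd⟩
  · intro m n hmn
    rw [Set.disjoint_left]
    intro y hym hyn
    match m, n with
    | 0, 0 => exact hmn rfl
    | 0, k + 1 =>
      rw [hP0] at hym; rw [hPn] at hyn
      have : r 0 < r (k + 1) := hmono (Nat.succ_pos k)
      simp only [Set.mem_setOf_eq] at hym hyn
      linarith
    | k + 1, 0 =>
      rw [hP0] at hyn; rw [hPn] at hym
      have : r 0 < r (k + 1) := hmono (Nat.succ_pos k)
      simp only [Set.mem_setOf_eq] at hym hyn
      linarith
    | k + 1, l + 1 =>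
      rw [hPn] at hym hyn
      simp only [Set.mem_setOf_eq] at hym hyn
      exact hmn (by rw [hmono.injective (hym ▸ hyn : r (k+1) = r (l+1))])
  · intro n
    match n with
    | 0 =>
      have : P 0 ⊆ Metric.closedBall x₀ (r 0) := by
        rw [hP0]; intro y hy; exact hy
      exact Metric.isBounded_closedBall.subset this
    | k + 1 =>
      have : P (k + 1) ⊆ Metric.closedBall x₀ (r (k + 1)) := by
        rw [hPn]; intro y hy; exact le_of_eq hy
      exact Metric.isBounded_closedBall.subset this
  · intro M hM
    obtain ⟨N, hN⟩ := (hdiv.eventually (Filter.eventually_gt_atTop M)).exists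
    refine ⟨fun n => if n ≤ N then P n else ∅, ?_, ?_, ?_⟩
    · intro n
      by_cases h : n ≤ N
      · simp only [if_pos h]
        refine ⟨le_refl _, ?_⟩
        match n with
        | 0 =>
          exact Metric.isBounded_closedBall.subset (by rw [hP0]; intro y hy; exact hy)
        | k + 1 =>
          exact Metric.isBounded_closedBall.subset
            (by rw [hPn]; intro y hy; exact le_of_eq hy)
      · simp only [if_neg h]
        exact ⟨Set.empty_subset _, Bornology.isBounded_empty⟩
    · apply Set.Finite.subset (Set.finite_Iic N)
      intro n hn
      simp only [Set.mem_setOf_eq] at hn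
      by_contra h
      exact hn (if_neg (fun hle => h hle))
    · intro m n hmn p hp q hq
      have hm : ¬ m ≤ N := by
        intro h; simp only [if_pos h] at hp; exact hp.2 hp.1
      have hn' : ¬ n ≤ N := by
        intro h; simp only [if_pos h] at hq; exact hq.2 hq.1
      have hmN : N < m := Nat.lt_of_not_le hm
      have hnN : N < n := Nat.lt_of_not_le hn'
      obtain ⟨k, rfl⟩ : ∃ k, m = k + 1 := ⟨m - 1, (Nat.succ_pred_eq_of_pos (Nat.lt_of_le_of_lt (Nat.zero_le N) hmN)).symm⟩
      obtain ⟨l, rfl⟩ : ∃ l, n = l + 1 := ⟨n - 1, (Nat.succ_pred_eq_of_pos (Nat.lt_of_le_of_lt (Nat.zero_le N) hnN)).symm⟩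
      have hpd : dist p x₀ = r (k + 1) := by
        have := hp.1; rw [hPn] at this; exact this
      have hqd : dist q x₀ = r (l + 1) := by
        have := hq.1; rw [hPn] at this; exact this
      have hrm : M < r (k + 1) := lt_of_lt_of_le hN (hmono.monotone hmN.le)
      have hrn : M < r (l + 1) := lt_of_lt_of_le hN (hmono.monotone hnN.le)
      have hne : r (k + 1) ≠ r (l + 1) := fun h => hmn (hmono.injective h)
      rcases lt_or_gt_of_ne hne with h | h
      · have := ultra_dist_ge hultra x₀ q p (by rw [hpd, hqd]; exact h)
        rw [hqd] at this
        calc M < r (l + 1) := hrn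
          _ ≤ dist q p := this
          _ = dist p q := dist_comm q p
      · have := ultra_dist_ge hultra x₀ p q (by rw [hpd, hqd]; exact h)
        rw [hpd] at this
        exact lt_of_lt_of_le hrm this
end

section
/- Given a finite set D of non-negative integers containing 0 and given m ≥ 1, there exists a finite ultrametric space FU(m, D) with all distances in D such that every D-ultrametric space X containing at most m points admits an isometric embedding into FU(m, D). -/
/-- All distances of the metric space belong to the set `D` of natural numbers. -/
def DistIn (X : Type*) [MetricSpace X] (D : Finset ℕ) : Prop :=
  ∀ x y : X, ∃ a ∈ D, dist x y = (a : ℝ)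

/-!
Let `D⁺ = D \ {0}`. On the words `w : D⁺ → α` put the distance `max {a ∈ D⁺ | v a ≠ w a}`
(and `0` if there is no such `a`); it is an ultrametric with values in `D`. A
`D`-ultrametric space `X` embeds into the words over `X` by sending `x` to the word whose letter
at `a` is a chosen point of the open ball `B(x, a)`: two open balls of equal radius in an
ultrametric space are equal or disjoint, so the letters of `x` and `y` at `a` agree exactly
when `dist x y < a`. An injection `X ↪ Fin m` then transports this into the words over `Fin m`.
-/

open Finset Metric

section LevelDist

variable {D : Finset ℕ} {α β : Type*}

open Classical in
noncomputable def levelDist (v w : D.erase 0 → α) : ℕ :=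
  (univ.filter fun a => v a ≠ w a).sup Subtype.val

theorem levelDist_le_iff {v w : D.erase 0 → α} {n : ℕ} :
    levelDist v w ≤ n ↔ ∀ a : D.erase 0, n < a.1 → v a = w a := by
  simp only [levelDist, Finset.sup_le_iff, mem_filter, mem_univ, true_and]
  exact forall_congr' fun a => not_imp_comm.trans (by rw [not_le])

theorem levelDist_comm (v w : D.erase 0 → α) : levelDist v w = levelDist w v := by
  classical
  rw [levelDist, levelDist, filter_congr fun a _ => ne_comm]

theorem levelDist_le_max (u v w : D.erase 0 → α) :
    levelDist u w ≤ max (levelDist u v) (levelDist v w) :=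
  levelDist_le_iff.2 fun a ha =>
    (levelDist_le_iff.1 le_rfl a (lt_of_le_of_lt (le_max_left _ _) ha)).trans
      (levelDist_le_iff.1 le_rfl a (lt_of_le_of_lt (le_max_right _ _) ha))

theorem levelDist_eq_zero_iff {v w : D.erase 0 → α} : levelDist v w = 0 ↔ v = w := by
  rw [← Nat.le_zero, levelDist_le_iff, funext_iff]
  exact forall_congr' fun a => imp_iff_right (Nat.pos_of_ne_zero (mem_erase.1 a.2).1)

theorem levelDist_mem (h0 : 0 ∈ D) (v w : D.erase 0 → α) : levelDist v w ∈ D := by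
  classical
  rcases (univ.filter fun a => v a ≠ w a).eq_empty_or_nonempty with h | h
  · simpa [levelDist, h] using h0
  · obtain ⟨a, -, ha⟩ := exists_mem_eq_sup _ h Subtype.val
    rw [levelDist, ha]
    exact mem_of_mem_erase a.2

theorem levelDist_comp_of_injective {φ : α → β} (hφ : φ.Injective) (v w : D.erase 0 → α) :
    levelDist (φ ∘ v) (φ ∘ w) = levelDist v w := by
  classical
  rw [levelDist, levelDist]
  exact congrArg (sup · _) (filter_congr fun a _ => hφ.ne_iff)

end LevelDist

def LevelWord (D : Finset ℕ) (α : Type*) := D.erase 0 → α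

namespace LevelWord

variable {D : Finset ℕ} {α β : Type*}

instance [Finite α] : Finite (LevelWord D α) := Pi.finite

noncomputable instance : MetricSpace (LevelWord D α) where
  dist v w := levelDist v w
  dist_self v := (congrArg Nat.cast (levelDist_eq_zero_iff.2 rfl)).trans Nat.cast_zero
  dist_comm v w := congrArg Nat.cast (levelDist_comm v w)
  dist_triangle u v w := by
    have h : (levelDist u w : ℝ) ≤ max (levelDist u v : ℝ) (levelDist v w) := by
      exact_mod_cast levelDist_le_max u v w
    exact h.trans (max_le_add_of_nonneg (Nat.cast_nonneg _) (Nat.cast_nonneg _))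
  eq_of_dist_eq_zero h := levelDist_eq_zero_iff.1 (by exact_mod_cast h)

theorem dist_eq (v w : LevelWord D α) : dist v w = levelDist v w := rfl

instance : IsUltrametricDist (LevelWord D α) :=
  ⟨fun u v w => by rw [dist_eq, dist_eq, dist_eq]; exact_mod_cast levelDist_le_max u v w⟩

def map (φ : α → β) (w : LevelWord D α) : LevelWord D β := φ ∘ w

theorem isometry_map {φ : α → β} (hφ : φ.Injective) : Isometry (map (D := D) φ) :=
  Isometry.of_dist_eq fun v w => by
    rw [dist_eq, dist_eq]
    exact congrArg Nat.cast (levelDist_comp_of_injective hφ v w)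

end LevelWord

section BallRep

variable {X : Type*} [PseudoMetricSpace X]

/-- A point of the open ball `B(x, r)`, chosen as a function of the ball alone. -/
noncomputable def ballRep (x : X) (r : ℝ) : X :=
  @Classical.epsilon X ⟨x⟩ (· ∈ ball x r)

theorem ballRep_mem {x : X} {r : ℝ} (hr : 0 < r) : ballRep x r ∈ ball x r :=
  @Classical.epsilon_spec X (· ∈ ball x r) ⟨x, mem_ball_self hr⟩

variable [IsUltrametricDist X]

theorem ballRep_eq_iff {x y : X} {r : ℝ} (hr : 0 < r) :
    ballRep x r = ballRep y r ↔ dist x y < r := by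
  constructor
  · intro h
    by_contra hxy
    have hdisj : Disjoint (ball x r) (ball y r) :=
      (IsUltrametricDist.ball_eq_or_disjoint x y r).resolve_left fun heq =>
        hxy (mem_ball'.1 (heq ▸ mem_ball_self hr))
    exact hdisj.ne_of_mem (ballRep_mem hr) (ballRep_mem hr) h
  · intro h
    simp only [ballRep, IsUltrametricDist.ball_eq_of_mem (mem_ball'.2 h)]

variable {D : Finset ℕ}

noncomputable def toLevelWord (D : Finset ℕ) (x : X) : LevelWord D X :=
  fun a => ballRep x a.1

theorem toLevelWord_eq_iff {x y : X} (a : D.erase 0) :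
    toLevelWord D x a = toLevelWord D y a ↔ dist x y < a.1 :=
  ballRep_eq_iff (Nat.cast_pos.2 (Nat.pos_of_ne_zero (mem_erase.1 a.2).1))

theorem levelDist_toLevelWord {x y : X} {d : ℕ} (hd : d ∈ D) (hxy : dist x y = d) :
    levelDist (toLevelWord D x) (toLevelWord D y) = d := by
  refine eq_of_forall_ge_iff fun n => levelDist_le_iff.trans ⟨fun h => ?_, fun h a ha => ?_⟩
  · by_contra! hn
    obtain rfl | hd0 := Nat.eq_zero_or_pos d
    · exact Nat.not_lt_zero n hn
    · have hlt := (toLevelWord_eq_iff ⟨d, mem_erase.2 ⟨hd0.ne', hd⟩⟩).1 (h _ hn)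
      exact lt_irrefl (d : ℝ) (hxy ▸ hlt)
  · exact (toLevelWord_eq_iff a).2 (hxy ▸ Nat.cast_lt.2 (h.trans_lt ha))

end BallRep

theorem isometry_toLevelWord {X : Type*} [MetricSpace X] [IsUltrametricDist X] {D : Finset ℕ}
    (hD : DistIn X D) : Isometry (toLevelWord (X := X) D) :=
  Isometry.of_dist_eq fun x y => by
    obtain ⟨d, hd, hxy⟩ := hD x y
    rw [LevelWord.dist_eq, levelDist_toLevelWord hd hxy, hxy]

theorem exists_finite_universal_ultrametric_general (D : Finset ℕ) (h0 : 0 ∈ D) (m : ℕ) :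
    ∃ (F : Type) (_ : MetricSpace F), Finite F ∧ IsUltra F ∧ DistIn F D ∧
      ∀ (X : Type u) (_ : MetricSpace X), IsUltra X → DistIn X D →
        Finite X → Nat.card X ≤ m → ∃ f : X → F, Isometry f := by
  refine ⟨LevelWord D (Fin m), inferInstance, inferInstance,
    IsUltrametricDist.dist_triangle_max, fun v w => ⟨_, levelDist_mem h0 v w, rfl⟩,
    fun X _ hU hD _ hcard => ?_⟩
  have : IsUltrametricDist X := ⟨hU⟩
  let φ : X ↪ Fin m := (Finite.equivFin X).toEmbedding.trans (Fin.castLEEmb hcard)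
  exact ⟨_, (LevelWord.isometry_map φ.injective).comp (isometry_toLevelWord hD)⟩

/-- Proposition 4.4: given a finite set `D` of non-negative integers containing `0` and given
`m ≥ 1`, there is a finite `D`-ultrametric space `FU(m, D)` such that every `D`-ultrametric
space with at most `m` points isometrically embeds into it. -/
theorem exists_finite_universal_ultrametric (D : Finset ℕ) (h0 : 0 ∈ D) (m : ℕ)
    (hm : 1 ≤ m) :
    ∃ (F : Type) (_ : MetricSpace F), Finite F ∧ IsUltra F ∧ DistIn F D ∧
      ∀ (X : Type u) (_ : MetricSpace X), IsUltra X → DistIn X D →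
        Finite X → Nat.card X ≤ m → ∃ f : X → F, Isometry f :=
  exists_finite_universal_ultrametric_general D h0 m
end

section
/- Given a finite set D of non-negative integers containing 0, there exists a countable D-ultrametric space CU(D) such that every countable D-ultrametric space X admits an isometric embedding into CU(D). -/
/-!
A point of `CU(D)` is a choice of one natural-number label for every nonzero `a ∈ D`, and two
points are at distance the largest `a` at which their labels differ (`0` if there is none).
In a countable ultrametric space `X` and for every `a > 0`, lying at distance `< a` is an
equivalence relation with countably many classes; labelling `x` at `a` by an injective code of
its class sends `X` into `CU(D)`. The labels of `x` and `y` differ exactly at the `a ≤ d(x, y)`,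
so when `d(x, y) ∈ D` the largest such `a` is `d(x, y)` itself.
-/

open Finset

def CU (D : Finset ℕ) (α : Type*) : Type _ := D.erase 0 → α

namespace CU

variable {D : Finset ℕ} {α : Type*}

theorem coe_pos (a : D.erase 0) : 0 < (a : ℕ) :=
  Nat.pos_of_ne_zero (ne_of_mem_erase a.2)

instance [Countable α] : Countable (CU D α) :=
  inferInstanceAs (Countable (D.erase 0 → α))

open Classical in
noncomputable def levelDist (x y : CU D α) : ℕ :=
  (univ.filter fun a => x a ≠ y a).sup (↑)

theorem levelDist_le_iff {x y : CU D α} {n : ℕ} :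
    levelDist x y ≤ n ↔ ∀ a : D.erase 0, n < a → x a = y a := by
  simp only [levelDist, Finset.sup_le_iff, mem_filter, mem_univ, true_and]
  exact forall_congr' fun a => not_imp_comm.trans (by rw [not_le])

theorem levelDist_self (x : CU D α) : levelDist x x = 0 :=
  Nat.le_zero.mp (levelDist_le_iff.2 fun _ _ => rfl)

theorem levelDist_comm (x y : CU D α) : levelDist x y = levelDist y x :=
  eq_of_forall_ge_iff fun _ => by simp only [levelDist_le_iff, eq_comm]

theorem eq_of_levelDist_eq_zero {x y : CU D α} (h : levelDist x y = 0) : x = y :=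
  funext fun a => levelDist_le_iff.1 h.le a (coe_pos a)

theorem levelDist_le_max (x y z : CU D α) :
    levelDist x z ≤ max (levelDist x y) (levelDist y z) :=
  levelDist_le_iff.2 fun a ha =>
    (levelDist_le_iff.1 le_rfl a ((le_max_left _ _).trans_lt ha)).trans
      (levelDist_le_iff.1 le_rfl a ((le_max_right _ _).trans_lt ha))

theorem levelDist_mem (h0 : 0 ∈ D) (x y : CU D α) : levelDist x y ∈ D :=
  Finset.sup_mem (D : Set ℕ) h0
    (fun a ha b hb => by rcases le_total a b with h | h <;> simpa [h])
    _ _ fun a _ => mem_of_mem_erase a.2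

noncomputable instance : MetricSpace (CU D α) where
  dist x y := levelDist x y
  dist_self x := by simp [levelDist_self]
  dist_comm x y := by simp only [levelDist_comm]
  dist_triangle x y z := by
    have h : (levelDist x z : ℝ) ≤ max (levelDist x y : ℝ) (levelDist y z) := by
      exact_mod_cast levelDist_le_max x y z
    exact h.trans (max_le_add_of_nonneg (Nat.cast_nonneg _) (Nat.cast_nonneg _))
  eq_of_dist_eq_zero h := eq_of_levelDist_eq_zero (by exact_mod_cast h)

theorem dist_eq (x y : CU D α) : dist x y = levelDist x y := rfl

theorem isUltra : IsUltra (CU D α) := fun x y z => by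
  simp only [dist_eq]
  exact_mod_cast levelDist_le_max x y z

theorem distIn (h0 : 0 ∈ D) : DistIn (CU D α) D :=
  fun x y => ⟨_, levelDist_mem h0 x y, rfl⟩

end CU

namespace IsUltra

variable {X : Type*} [MetricSpace X]

def ballSetoid (hX : IsUltra X) {r : ℝ} (hr : 0 < r) : Setoid X where
  r x y := dist x y < r
  iseqv :=
    ⟨fun x => by simpa using hr, fun h => by rwa [dist_comm],
      fun h₁ h₂ => (hX _ _ _).trans_lt (max_lt h₁ h₂)⟩

noncomputable def toCU (hX : IsUltra X) [Countable X] (D : Finset ℕ) (x : X) : CU D ℕ :=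
  fun a =>
    (exists_injective_nat (Quotient (hX.ballSetoid (Nat.cast_pos.2 (CU.coe_pos a))))).choose ⟦x⟧

theorem toCU_apply_eq_iff (hX : IsUltra X) [Countable X] {D : Finset ℕ} (x y : X)
    (a : D.erase 0) : hX.toCU D x a = hX.toCU D y a ↔ dist x y < a :=
  (exists_injective_nat _).choose_spec.eq_iff.trans Quotient.eq

theorem dist_toCU (hX : IsUltra X) [Countable X] {D : Finset ℕ} (hD : DistIn X D) (x y : X) :
    dist (hX.toCU D x) (hX.toCU D y) = dist x y := by
  obtain ⟨d, hd, hxy⟩ := hD x y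
  rw [CU.dist_eq, hxy, Nat.cast_inj]
  refine eq_of_forall_ge_iff fun n => ?_
  simp only [CU.levelDist_le_iff, toCU_apply_eq_iff, hxy, Nat.cast_lt]
  refine ⟨fun h => not_lt.1 fun hnd => ?_, fun hdn a ha => hdn.trans_lt ha⟩
  have hd0 : d ≠ 0 := (n.zero_le.trans_lt hnd).ne'
  exact lt_irrefl d (h ⟨d, mem_erase.2 ⟨hd0, hd⟩⟩ hnd)

end IsUltra

/-- Proposition 4.5: given a finite set `D` of non-negative integers containing `0`, there is
a countable `D`-ultrametric space `CU(D)` such that every countable `D`-ultrametric space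
isometrically embeds into it. -/
theorem exists_countable_universal_ultrametric (D : Finset ℕ) (h0 : 0 ∈ D) :
    ∃ (C : Type) (_ : MetricSpace C), Countable C ∧ IsUltra C ∧ DistIn C D ∧
      ∀ (X : Type u) (_ : MetricSpace X), IsUltra X → DistIn X D →
        Countable X → ∃ f : X → C, Isometry f := by
  refine ⟨CU D ℕ, inferInstance, inferInstance, CU.isUltra, CU.distIn h0, ?_⟩
  intro X _ hX hD _
  exact ⟨hX.toCU D, Isometry.of_dist_eq (hX.dist_toCU hD)⟩
end

section
/- There exists a countable integral ultrametric space CU such that every separable metric space X of asymptotic dimension 0 coarsely embeds into CU. -/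
/-- A metric space has asymptotic dimension `0` if for every `r > 0` the `r`-components of
the space (classes of the chain relation generated by `dist a b < r`) are uniformly
bounded. -/
def AsdimZero (X : Type*) [MetricSpace X] : Prop :=
  ∀ r : ℝ, r > 0 → ∃ B : ℝ, B > 0 ∧ ∀ x y : X,
    Relation.ReflTransGen (fun a b : X => dist a b < r) x y → dist x y ≤ B

/-- `f` is a coarse embedding: uniformly bornologous and uniformly proper. -/
def CoarseEmbedding {X Y : Type*} [MetricSpace X] [MetricSpace Y] (f : X → Y) : Prop :=
  (∀ R : ℝ, R > 0 → ∃ S' : ℝ, S' > 0 ∧ ∀ x y : X, dist x y ≤ R → dist (f x) (f y) ≤ S') ∧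
  (∀ R : ℝ, R > 0 → ∃ S' : ℝ, S' > 0 ∧ ∀ x y : X, dist (f x) (f y) ≤ R → dist x y ≤ S')

/-!
For each `n` the `(n + 1)`-components of a separable metric space `X` are countably many, so they
can be numbered, the component of a base point getting the number `0`. Sending `x` to the sequence
of the numbers of its components gives a finitely supported sequence, and two points have
sequences that agree from index `n` on iff they lie in a common `(n + 1)`-component (components
grow with the scale). For the ultrametric "one plus the last index where two sequences differ"
on `ℕ →₀ ℕ` this map is therefore bornologous, and it is uniformly proper exactly because
asymptotic dimension `0` bounds the components at each scale uniformly.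
-/

namespace Finsupp

variable {M : Type*} [Zero M] [DecidableEq M]

def ultraDist (f g : ℕ →₀ M) : ℕ :=
  (f.neLocus g).sup (· + 1)

theorem ultraDist_le_iff {f g : ℕ →₀ M} {n : ℕ} :
    f.ultraDist g ≤ n ↔ ∀ m, n ≤ m → f m = g m := by
  simp only [ultraDist, Finset.sup_le_iff, mem_neLocus, not_imp_comm, not_le, Nat.lt_add_one_iff]

theorem ultraDist_eq_zero_iff {f g : ℕ →₀ M} : f.ultraDist g = 0 ↔ f = g := by
  rw [← Nat.le_zero, ultraDist_le_iff, Finsupp.ext_iff]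
  simp

theorem ultraDist_comm (f g : ℕ →₀ M) : f.ultraDist g = g.ultraDist f :=
  eq_of_forall_ge_iff fun n => by simp only [ultraDist_le_iff, eq_comm]

theorem ultraDist_le_max (f g h : ℕ →₀ M) :
    f.ultraDist h ≤ max (f.ultraDist g) (g.ultraDist h) :=
  ultraDist_le_iff.2 fun m hm =>
    (ultraDist_le_iff.1 (le_max_left _ _) m hm).trans
      (ultraDist_le_iff.1 (le_max_right _ _) m hm)

abbrev ultrametricSpace : MetricSpace (ℕ →₀ M) where
  dist f g := f.ultraDist g
  dist_self f := by simp [ultraDist_eq_zero_iff]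
  dist_comm f g := by rw [ultraDist_comm]
  dist_triangle f g h := by
    exact_mod_cast (ultraDist_le_max f g h).trans
      (max_le_add_of_nonneg (Nat.zero_le _) (Nat.zero_le _))
  eq_of_dist_eq_zero h := ultraDist_eq_zero_iff.1 (Nat.cast_eq_zero.1 h)

end Finsupp

attribute [local instance] Finsupp.ultrametricSpace

theorem Finsupp.dist_eq_ultraDist {M : Type*} [Zero M] [DecidableEq M] (f g : ℕ →₀ M) :
    dist f g = f.ultraDist g :=
  rfl

instance {M : Type*} [Zero M] [DecidableEq M] : IsUltrametricDist (ℕ →₀ M) where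
  dist_triangle_max f g h := by
    simp only [Finsupp.dist_eq_ultraDist]
    exact_mod_cast f.ultraDist_le_max g h

theorem exists_injective_nat_apply_eq_zero {α : Type*} [Countable α] (a : α) :
    ∃ c : α → ℕ, Function.Injective c ∧ c a = 0 := by
  obtain ⟨e, he⟩ := Countable.exists_injective_nat α
  exact ⟨Equiv.swap (e a) 0 ∘ e, (Equiv.injective _).comp he, Equiv.swap_apply_left _ _⟩

open Finsupp in
theorem exists_finsupp_ultraDist_le_iff {X : Type*} (S : ℕ → Setoid X) (hS : Monotone S)
    [∀ n, Countable (Quotient (S n))] (hS_top : ∀ x y, ∃ n, S n x y) :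
    ∃ f : X → ℕ →₀ ℕ, ∀ x y n, (f x).ultraDist (f y) ≤ n ↔ S n x y := by
  rcases isEmpty_or_nonempty X with hX | ⟨⟨x₀⟩⟩
  · exact ⟨isEmptyElim, fun x => isEmptyElim x⟩
  choose c hc_inj hc_zero using
    fun n => exists_injective_nat_apply_eq_zero (Quotient.mk (S n) x₀)
  choose N hN using fun x => hS_top x x₀
  have code_eq_zero : ∀ x m, N x ≤ m → c m (Quotient.mk _ x) = 0 := fun x m hm => by
    rw [Quotient.sound (hS hm (hN x)), hc_zero]
  let f x : ℕ →₀ ℕ := onFinset (Finset.range (N x)) (fun m => c m (Quotient.mk _ x))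
    fun m hm => Finset.mem_range.2 (not_le.1 (mt (code_eq_zero x m) hm))
  refine ⟨f, fun x y n => ?_⟩
  simp only [ultraDist_le_iff, f, onFinset_apply, (hc_inj _).eq_iff, Quotient.eq]
  exact ⟨fun h => h n le_rfl, fun h m hm => hS hm h⟩

section Chains

variable {X : Type*} [PseudoMetricSpace X]

def chainSetoid (r : ℝ) : Setoid X where
  r := Relation.ReflTransGen fun a b : X => dist a b < r
  iseqv :=
    haveI : Std.Symm fun a b : X => dist a b < r := ⟨fun a b h => by rwa [dist_comm]⟩
    ⟨fun _ => .refl, fun h => Std.Symm.symm _ _ h, .trans⟩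

theorem chainSetoid_of_dist_lt {r : ℝ} {x y : X} (h : dist x y < r) : chainSetoid r x y :=
  .single h

theorem chainSetoid_mono {r s : ℝ} (h : r ≤ s) : chainSetoid (X := X) r ≤ chainSetoid s :=
  Setoid.le_def.2 fun hxy =>
    Relation.ReflTransGen.mono (fun _ _ (hab : dist _ _ < r) => hab.trans_le h) _ _ hxy

theorem countable_quotient_chainSetoid [TopologicalSpace.SeparableSpace X] {r : ℝ} (hr : 0 < r) :
    Countable (Quotient (chainSetoid (X := X) r)) := by
  obtain ⟨D, hD_count, hD_dense⟩ := TopologicalSpace.exists_countable_dense X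
  have := hD_count.to_subtype
  refine Function.Surjective.countable (f := fun d : D => Quotient.mk _ (d : X)) ?_
  refine Quotient.ind fun x => ?_
  obtain ⟨d, hd, hxd⟩ := hD_dense.exists_dist_lt x hr
  exact ⟨⟨d, hd⟩, Quotient.sound (chainSetoid_of_dist_lt (by rwa [dist_comm]))⟩

end Chains

theorem AsdimZero.exists_coarseEmbedding_finsupp {X : Type*} [MetricSpace X]
    [TopologicalSpace.SeparableSpace X] (hX : AsdimZero X) :
    ∃ f : X → ℕ →₀ ℕ, CoarseEmbedding f := by
  have (n : ℕ) : Countable (Quotient (chainSetoid (X := X) (n + 1))) :=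
    countable_quotient_chainSetoid (by positivity)
  obtain ⟨f, hf⟩ := exists_finsupp_ultraDist_le_iff (fun n : ℕ => chainSetoid (n + 1))
    (fun m n hmn => chainSetoid_mono (by gcongr))
    fun x y : X =>
      ⟨⌈dist x y⌉₊, chainSetoid_of_dist_lt ((Nat.le_ceil _).trans_lt (lt_add_one _))⟩
  refine ⟨f, fun R hR => ⟨R, hR, fun x y hxy => ?_⟩, fun R hR => ?_⟩
  · have : (f x).ultraDist (f y) ≤ ⌊R⌋₊ :=
      (hf x y _).2 (chainSetoid_of_dist_lt (hxy.trans_lt (Nat.lt_floor_add_one R)))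
    calc dist (f x) (f y) = (f x).ultraDist (f y) := Finsupp.dist_eq_ultraDist _ _
      _ ≤ ⌊R⌋₊ := by exact_mod_cast this
      _ ≤ R := Nat.floor_le hR.le
  · obtain ⟨B, hB, hB_bound⟩ := hX (⌊R⌋₊ + 1) (by positivity)
    exact ⟨B, hB, fun x y hxy => hB_bound x y ((hf x y _).1 (Nat.le_floor hxy))⟩

/-- Theorem 5.1: there is a countable integral ultrametric space `CU` such that every
separable metric space of asymptotic dimension `0` coarsely embeds into `CU`. -/
theorem exists_universal_separable_asdim_zero :
    ∃ (CU : Type) (_ : MetricSpace CU), Countable CU ∧ IsUltra CU ∧ IsIntegralDist CU ∧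
      ∀ (X : Type u) (_ : MetricSpace X), TopologicalSpace.SeparableSpace X →
        AsdimZero X → ∃ f : X → CU, CoarseEmbedding f :=
  ⟨ℕ →₀ ℕ, inferInstance, inferInstance, dist_triangle_max,
    fun f g => ⟨f.ultraDist g, rfl⟩, fun _ _ _ hX => hX.exists_coarseEmbedding_finsupp⟩
end

section
/- There exists a countable and proper integral ultrametric space PU such that every proper metric space X of asymptotic dimension 0 coarsely embeds into PU. -/
/-!
Points of `PU` are finitely supported `a : ℕ → ℕ` with `a n ≤ max (supp a)`, at distance one more
than the largest index where they differ. This is an integral ultrametric, and the constraint on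
the values makes closed balls finite.

To embed `X`, fix a base point `x₀` and a dense sequence; coordinate `2 * m` of the image of `x`
names the `(m + 1)`-component of `x` (by the first point of the sequence in it, `0` for the
component of `x₀`). Components are open and, as `X` has asymptotic dimension `0`, bounded, so only
finitely many of them meet the `(D + 1)`-component of `x₀`: the names are bounded in terms of the
depth `D` of `x`, the scale at which it joins `x₀`. A `1` at an odd coordinate beyond that bound,
depending only on `D`, puts the image in `PU`. Points in different `(k + 1)`-components differ at
coordinate `2 * k`; points in one `(k + 1)`-component have equal depth or depths at most `k`, so
they differ only below a bound depending on `k`.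
-/

open Finset Metric

noncomputable def topDiff (a b : ℕ →₀ ℕ) : ℕ := (a.neLocus b).sup (· + 1)

section topDiff
variable {a b c : ℕ →₀ ℕ}

theorem topDiff_le_iff {N : ℕ} : topDiff a b ≤ N ↔ ∀ n, a n ≠ b n → n < N := by
  simp [topDiff, Finset.sup_le_iff, Finsupp.mem_neLocus]

theorem lt_topDiff {n : ℕ} (h : a n ≠ b n) : n < topDiff a b :=
  not_le.1 fun hle => (Nat.lt_irrefl n (topDiff_le_iff.1 hle n h))

theorem topDiff_comm : topDiff a b = topDiff b a := by rw [topDiff, Finsupp.neLocus_comm, topDiff]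

theorem topDiff_eq_zero : topDiff a b = 0 ↔ a = b := by
  rw [← Nat.le_zero, topDiff_le_iff, Finsupp.ext_iff]
  simp

theorem topDiff_le_max : topDiff a c ≤ max (topDiff a b) (topDiff b c) := by
  refine topDiff_le_iff.2 fun n hn => ?_
  by_cases h : a n = b n
  · exact lt_max_of_lt_right (lt_topDiff (h ▸ hn))
  · exact lt_max_of_lt_left (lt_topDiff h)

end topDiff

def PU : Type := {a : ℕ →₀ ℕ // ∀ n, a n ≤ a.support.sup id}

namespace PU

noncomputable instance : MetricSpace PU where
  dist a b := topDiff a.1 b.1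
  dist_self a := by simp [topDiff_eq_zero.2 rfl]
  dist_comm a b := by rw [topDiff_comm]
  dist_triangle a b c := by
    exact_mod_cast topDiff_le_max.trans (max_le (Nat.le_add_right _ _) (Nat.le_add_left _ _))
  eq_of_dist_eq_zero h := Subtype.ext (topDiff_eq_zero.1 (by exact_mod_cast h))

theorem dist_def (a b : PU) : dist a b = topDiff a.1 b.1 := rfl

instance : IsUltrametricDist PU :=
  ⟨fun a b c => by simp only [dist_def]; exact_mod_cast topDiff_le_max⟩

instance : Countable PU := Subtype.countable

theorem apply_eq_of_dist_le {a b : PU} {r : ℝ} (h : dist a b ≤ r) {n : ℕ} (hn : r ≤ n) :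
    a.1 n = b.1 n := by
  by_contra hne
  have : (n : ℝ) < topDiff a.1 b.1 := by exact_mod_cast lt_topDiff hne
  rw [dist_def] at h
  linarith

theorem finite_closedBall (a : PU) (r : ℝ) : (closedBall a r).Finite := by
  set K := max (a.1.support.sup id) ⌈r⌉₊
  have hzero : ∀ b ∈ closedBall a r, ∀ n, K < n → b.1 n = 0 := by
    intro b hb n hn
    have hrn : r ≤ n := (Nat.le_ceil r).trans (by exact_mod_cast (le_max_right _ _).trans hn.le)
    rw [apply_eq_of_dist_le hb hrn]
    by_contra h
    have hnK : n ≤ K :=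
      (Finset.le_sup (f := id) (Finsupp.mem_support_iff.2 h)).trans (le_max_left _ _)
    exact hn.not_ge hnK
  -- Hence the ball lies below the finsupp equal to `K` on `[0, K]`, in the locally finite order.
  refine ((Set.finite_Iic (Finsupp.indicator (range (K + 1)) fun _ _ => K)).preimage
    Subtype.val_injective.injOn).subset fun b hb n => ?_
  rw [Finsupp.indicator_apply]
  split_ifs with hn
  · exact (b.2 n).trans (Finset.sup_le fun m hm => not_lt.1 fun hKm =>
      Finsupp.mem_support_iff.1 hm (hzero b hb m hKm))
  · rw [hzero b hb n (by simpa using hn)]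

instance : ProperSpace PU := ⟨fun a r => (finite_closedBall a r).isCompact⟩

noncomputable def ofBounded (f : ℕ → ℕ) (T : ℕ) (hzero : ∀ n, T < n → f n = 0)
    (hle : ∀ n, f n ≤ T) (hT : f T ≠ 0) : PU :=
  ⟨Finsupp.onFinset (range (T + 1)) f fun n hn =>
      mem_range.2 (Nat.lt_succ_of_le (not_lt.1 fun h => hn (hzero n h))),
    fun n => (hle n).trans (Finset.le_sup (f := id) (Finsupp.mem_support_iff.2 hT))⟩

theorem ofBounded_apply {f : ℕ → ℕ} {T : ℕ} {h₁ h₂ h₃} (n : ℕ) :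
    (ofBounded f T h₁ h₂ h₃).1 n = f n := rfl

end PU

section Components
variable {X : Type*} [MetricSpace X]

def SameComponent (r : ℝ) : X → X → Prop := Relation.ReflTransGen fun a b => dist a b < r

namespace SameComponent
variable {r r' : ℝ} {x y z : X}

theorem of_dist_lt (h : dist x y < r) : SameComponent r x y := .single h

protected theorem refl (x : X) : SameComponent r x x := Relation.ReflTransGen.refl

protected theorem symm (h : SameComponent r x y) : SameComponent r y x := by
  induction h with
  | refl => exact SameComponent.refl _
  | tail _ hbc ih => exact Relation.ReflTransGen.head (show dist _ _ < r by rwa [dist_comm]) ih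

protected theorem trans (h : SameComponent r x y) (h' : SameComponent r y z) :
    SameComponent r x z :=
  Relation.ReflTransGen.trans h h'

theorem mono (hr : r ≤ r') (h : SameComponent r x y) : SameComponent r' x y :=
  Relation.ReflTransGen.mono (fun _ _ (hab : dist _ _ < r) => hab.trans_le hr) x y h

end SameComponent

theorem isOpen_setOf_sameComponent {r : ℝ} (hr : 0 < r) (x : X) :
    IsOpen {y | SameComponent r x y} :=
  isOpen_iff.2 fun _ hy => ⟨r, hr, fun _ hz =>
    SameComponent.trans hy (.of_dist_lt (by rwa [mem_ball, dist_comm] at hz))⟩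

theorem isBounded_setOf_sameComponent (ha : AsdimZero X) {r : ℝ} (hr : 0 < r) (x : X) :
    Bornology.IsBounded {y | SameComponent r x y} := by
  obtain ⟨B, -, hB⟩ := ha r hr
  exact isBounded_closedBall.subset fun y hy => by
    rw [mem_closedBall, dist_comm]
    exact hB x y hy

/-- Components are open, so finitely many of them cover the compact closure of `S`. -/
theorem finite_image_of_sameComponent_invariant [ProperSpace X] {β : Type*} {r : ℝ}
    (hr : 0 < r) {f : X → β} (hf : ∀ x y, SameComponent r x y → f x = f y) {S : Set X}
    (hS : Bornology.IsBounded S) : (f '' S).Finite := by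
  obtain ⟨t, ht⟩ := hS.isCompact_closure.elim_finite_subcover _ (isOpen_setOf_sameComponent hr)
    fun x _ => Set.mem_iUnion.2 ⟨x, SameComponent.refl x⟩
  refine (t.finite_toSet.image f).subset ?_
  rintro _ ⟨x, hx, rfl⟩
  obtain ⟨y, hy, hyx⟩ := Set.mem_iUnion₂.1 (ht (subset_closure hx))
  exact ⟨y, hy, hf y x hyx⟩

end Components

section Embedding
variable {X : Type*} [MetricSpace X] (x₀ : X) (s : ℕ → X) {x y : X}

noncomputable def depth (x : X) : ℕ := sInf {m : ℕ | SameComponent (m + 1) x₀ x}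

theorem depth_le_iff {m : ℕ} : depth x₀ x ≤ m ↔ SameComponent (m + 1) x₀ x := by
  have hdepth : SameComponent (depth x₀ x + 1) x₀ x :=
    Nat.sInf_mem (s := {m : ℕ | SameComponent (m + 1) x₀ x})
      ⟨⌊dist x₀ x⌋₊, SameComponent.of_dist_lt (Nat.lt_floor_add_one _)⟩
  exact ⟨fun h => hdepth.mono (by gcongr), fun h => Nat.sInf_le h⟩

theorem max_depth_eq {k : ℕ} (h : SameComponent (k + 1) x y) :
    max (depth x₀ x) k = max (depth x₀ y) k := by
  have key : ∀ {x y : X}, SameComponent (k + 1) x y →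
      max (depth x₀ x) k ≤ max (depth x₀ y) k := by
    intro x y h
    refine max_le ((depth_le_iff x₀).2 ?_) (le_max_right _ _)
    exact ((depth_le_iff x₀).1 (le_max_left _ _)).trans
      (h.symm.mono (by gcongr; exact_mod_cast le_max_right _ _))
  exact le_antisymm (key h) (key h.symm)

noncomputable def classIndex (r : ℝ) (x : X) : ℕ := sInf {i | SameComponent r x (s i)}

theorem classIndex_congr {r : ℝ} (h : SameComponent r x y) :
    classIndex s r x = classIndex s r y := by
  simp only [classIndex]
  congr 1
  ext i
  exact ⟨h.symm.trans, h.trans⟩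

variable {s} in
theorem sameComponent_of_classIndex_eq (hs : DenseRange s) {r : ℝ} (hr : 0 < r)
    (h : classIndex s r x = classIndex s r y) : SameComponent r x y := by
  have mem : ∀ z, SameComponent r z (s (classIndex s r z)) := fun z => Nat.sInf_mem <| by
    obtain ⟨i, hi⟩ := hs.exists_dist_lt z hr
    exact ⟨i, SameComponent.of_dist_lt hi⟩
  exact (mem x).trans (h ▸ (mem y).symm)

noncomputable def componentCode (m : ℕ) (x : X) : ℕ :=
  if depth x₀ x ≤ m then 0 else classIndex s (m + 1) x + 1

theorem componentCode_of_depth_le {m : ℕ} (h : depth x₀ x ≤ m) : componentCode x₀ s m x = 0 :=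
  if_pos h

theorem componentCode_congr {m : ℕ} (h : SameComponent (m + 1) x y) :
    componentCode x₀ s m x = componentCode x₀ s m y := by
  have hd : depth x₀ x ≤ m ↔ depth x₀ y ≤ m := by
    simp only [depth_le_iff]
    exact ⟨(·.trans h), (·.trans h.symm)⟩
  simp only [componentCode, hd, classIndex_congr s h]

variable {s} in
theorem sameComponent_of_componentCode_eq (hs : DenseRange s) {m : ℕ}
    (h : componentCode x₀ s m x = componentCode x₀ s m y) : SameComponent (m + 1) x y := by
  unfold componentCode at h
  split_ifs at h with hx hy
  · exact ((depth_le_iff x₀).1 hx).symm.trans ((depth_le_iff x₀).1 hy)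
  · exact sameComponent_of_classIndex_eq hs (by positivity) (by omega)

noncomputable def codeBound (D : ℕ) : ℕ :=
  sSup {n | ∃ m x, depth x₀ x ≤ D ∧ componentCode x₀ s m x = n}

theorem bddAbove_componentCode [ProperSpace X] (ha : AsdimZero X) (D : ℕ) :
    BddAbove {n | ∃ m x, depth x₀ x ≤ D ∧ componentCode x₀ s m x = n} := by
  have hfin : ∀ m : ℕ, (componentCode x₀ s m '' {x | depth x₀ x ≤ D}).Finite := fun m =>
    finite_image_of_sameComponent_invariant (r := m + 1) (by positivity)
      (fun _ _ => componentCode_congr x₀ s)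
      (by simpa only [depth_le_iff] using isBounded_setOf_sameComponent ha (by positivity) x₀)
  refine (((range D).finite_toSet.biUnion fun m _ => hfin m).insert 0).bddAbove.mono ?_
  rintro _ ⟨m, x, hx, rfl⟩
  by_cases hm : depth x₀ x ≤ m
  · exact Or.inl (componentCode_of_depth_le x₀ s hm)
  · exact Or.inr (Set.mem_biUnion (by simp only [coe_range, Set.mem_Iio]; omega) ⟨x, hx, rfl⟩)

theorem componentCode_le_codeBound [ProperSpace X] (ha : AsdimZero X) {D : ℕ}
    (h : depth x₀ x ≤ D) (m : ℕ) : componentCode x₀ s m x ≤ codeBound x₀ s D :=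
  le_csSup (bddAbove_componentCode x₀ s ha D) ⟨m, x, h, rfl⟩

theorem codeBound_mono [ProperSpace X] (ha : AsdimZero X) : Monotone (codeBound x₀ s) :=
  fun _ D' hD => csSup_le_csSup' (bddAbove_componentCode x₀ s ha D')
    fun _ ⟨m, x, hx, hn⟩ => ⟨m, x, hx.trans hD, hn⟩

/-- Odd, so distinct from every data coordinate `2 * m`; it exceeds those with `m < D` and all
codes of points of depth at most `D`. -/
noncomputable def markerIndex (D : ℕ) : ℕ := 2 * max D (codeBound x₀ s D) + 1

theorem markerIndex_mono [ProperSpace X] (ha : AsdimZero X) : Monotone (markerIndex x₀ s) :=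
  fun _ _ hD => by
    have := codeBound_mono x₀ s ha hD
    unfold markerIndex
    omega

noncomputable def embedCoord (x : X) (n : ℕ) : ℕ :=
  if n = markerIndex x₀ s (depth x₀ x) then 1
  else if Even n then componentCode x₀ s (n / 2) x else 0

theorem embedCoord_two_mul (m : ℕ) : embedCoord x₀ s x (2 * m) = componentCode x₀ s m x := by
  rw [embedCoord, if_neg (by unfold markerIndex; omega), if_pos (even_two_mul m),
    Nat.mul_div_cancel_left m two_pos]

theorem embedCoord_eq_zero {n : ℕ} (h : markerIndex x₀ s (depth x₀ x) < n) :
    embedCoord x₀ s x n = 0 := by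
  unfold markerIndex at h
  rw [embedCoord, if_neg (by unfold markerIndex; omega)]
  split_ifs
  · exact componentCode_of_depth_le x₀ s (by omega)
  · rfl

theorem embedCoord_le [ProperSpace X] (ha : AsdimZero X) (n : ℕ) :
    embedCoord x₀ s x n ≤ markerIndex x₀ s (depth x₀ x) := by
  unfold embedCoord
  split_ifs
  · unfold markerIndex; omega
  · exact (componentCode_le_codeBound x₀ s ha le_rfl _).trans (by unfold markerIndex; omega)
  · exact Nat.zero_le _

theorem embedCoord_eq_of_sameComponent {k n : ℕ} (h : SameComponent (k + 1) x y)
    (hd : depth x₀ x = depth x₀ y) (hn : 2 * k ≤ n) :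
    embedCoord x₀ s x n = embedCoord x₀ s y n := by
  unfold embedCoord
  rw [hd]
  split_ifs
  · rfl
  · exact componentCode_congr x₀ s (h.mono (by gcongr; omega))
  · rfl

noncomputable def embed [ProperSpace X] (ha : AsdimZero X) (x : X) : PU :=
  PU.ofBounded (embedCoord x₀ s x) _ (fun _ => embedCoord_eq_zero x₀ s)
    (embedCoord_le x₀ s ha) (by rw [embedCoord, if_pos rfl]; exact one_ne_zero)

variable {s} in
theorem le_dist_embed [ProperSpace X] (ha : AsdimZero X) (hs : DenseRange s) {k : ℕ}
    (h : ¬SameComponent (k + 1) x y) :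
    2 * (k : ℝ) + 1 ≤ dist (embed x₀ s ha x) (embed x₀ s ha y) := by
  have hk : 2 * k < topDiff (embed x₀ s ha x).1 (embed x₀ s ha y).1 := by
    refine lt_topDiff fun he => h (sameComponent_of_componentCode_eq x₀ hs ?_)
    simpa only [embed, PU.ofBounded_apply, embedCoord_two_mul] using he
  rw [PU.dist_def]
  exact_mod_cast hk

theorem dist_embed_le [ProperSpace X] (ha : AsdimZero X) {k : ℕ}
    (h : SameComponent (k + 1) x y) :
    dist (embed x₀ s ha x) (embed x₀ s ha y) ≤ markerIndex x₀ s k + 1 := by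
  suffices topDiff (embed x₀ s ha x).1 (embed x₀ s ha y).1 ≤ markerIndex x₀ s k + 1 by
    rw [PU.dist_def]; exact_mod_cast this
  refine topDiff_le_iff.2 fun n hn => ?_
  simp only [embed, PU.ofBounded_apply] at hn
  have hmax := max_depth_eq x₀ h
  by_cases hx : depth x₀ x ≤ k
  · have hle : ∀ z, depth x₀ z ≤ k → embedCoord x₀ s z n ≠ 0 → n ≤ markerIndex x₀ s k :=
      fun z hz hne =>
        (not_lt.1 (mt (embedCoord_eq_zero x₀ s) hne)).trans (markerIndex_mono x₀ s ha hz)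
    rcases eq_or_ne (embedCoord x₀ s x n) 0 with h0 | h0
    · exact Nat.lt_succ_of_le (hle y (by omega) (h0 ▸ hn.symm))
    · exact Nat.lt_succ_of_le (hle x hx h0)
  · refine not_le.1 fun hkn => hn (embedCoord_eq_of_sameComponent x₀ s h (by omega) ?_)
    unfold markerIndex at hkn
    omega

variable {s} in
theorem coarseEmbedding_embed [ProperSpace X] (ha : AsdimZero X) (hs : DenseRange s) :
    CoarseEmbedding (embed x₀ s ha) := by
  refine ⟨fun R _ => ⟨markerIndex x₀ s ⌊R⌋₊ + 1, by positivity, fun x y hxy =>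
    dist_embed_le x₀ s ha (.of_dist_lt (hxy.trans_lt (Nat.lt_floor_add_one R)))⟩, fun R _ => ?_⟩
  obtain ⟨B, hB, hBd⟩ := ha (⌊R⌋₊ + 1) (by positivity)
  refine ⟨B, hB, fun x y hxy => hBd x y (not_not.1 fun hc => ?_)⟩
  have := le_dist_embed x₀ ha hs hc
  have := Nat.lt_floor_add_one R
  have : (0 : ℝ) ≤ ⌊R⌋₊ := Nat.cast_nonneg _
  linarith

end Embedding

/-- Theorem 5.2: there is a countable and proper integral ultrametric space `PU` such that
every proper metric space of asymptotic dimension `0` coarsely embeds into `PU`. -/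
theorem exists_universal_proper_asdim_zero :
    ∃ (PU : Type) (_ : MetricSpace PU), Countable PU ∧ ProperSpace PU ∧ IsUltra PU ∧
      IsIntegralDist PU ∧
      ∀ (X : Type u) (_ : MetricSpace X), ProperSpace X →
        AsdimZero X → ∃ f : X → PU, CoarseEmbedding f := by
  refine ⟨PU, inferInstance, inferInstance, inferInstance, dist_triangle_max,
    fun a b => ⟨topDiff a.1 b.1, rfl⟩, fun X _ _ ha => ?_⟩
  rcases isEmpty_or_nonempty X with hX | hX
  · exact ⟨isEmptyElim, fun _ _ => ⟨1, one_pos, isEmptyElim⟩, fun _ _ => ⟨1, one_pos, isEmptyElim⟩⟩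
  · exact ⟨_, coarseEmbedding_embed hX.some ha (TopologicalSpace.denseRange_denseSeq X)⟩
end

section
/- Suppose (X, d_X) is an integral ultrametric space and (G, d_G) is a group equipped with a left-invariant integral ultrametric. If every bounded subset B of X admits an isometric embedding into G, then (X, d_X) coarsely embeds into (G, d_G). -/
/-- In an ultrametric space, all triangles are isosceles: if `dist c x < dist c y` then
`dist x y = dist c y`. -/
lemma ultra_isosceles {Z : Type*} [MetricSpace Z] (hu : IsUltra Z) (c x y : Z)
    (h : dist c x < dist c y) : dist x y = dist c y := by
  apply le_antisymm
  · have h1 := hu x c y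
    rw [dist_comm x c] at h1
    calc dist x y ≤ max (dist c x) (dist c y) := h1
      _ = dist c y := max_eq_right h.le
  · have h2 := hu c x y
    rcases le_max_iff.mp h2 with h3 | h3
    · linarith
    · exact h3

/-- Proposition 6.5: if `(X, d_X)` is an integral ultrametric space, `(G, d_G)` is a group
equipped with a left-invariant integral ultrametric, and every bounded subset of `X`
isometrically embeds into `G`, then `X` coarsely embeds into `G`. -/
theorem coarseEmbedding_of_bounded_embeddings {X G : Type*} [MetricSpace X]
    [Group G] [MetricSpace G]
    (hXu : IsUltra X) (hXi : IsIntegralDist X)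
    (hGinv : ∀ g a b : G, dist (g * a) (g * b) = dist a b)
    (hGu : IsUltra G) (hGi : IsIntegralDist G)
    (hemb : ∀ B : Set X, Bornology.IsBounded B → ∃ f : B → G, Isometry f) :
    ∃ f : X → G, CoarseEmbedding f := by
  rcases isEmpty_or_nonempty X with hX | hX
  · refine ⟨fun x => isEmptyElim x, ?_, ?_⟩ <;>
      exact fun R hR => ⟨1, one_pos, fun x => isEmptyElim x⟩
  obtain ⟨x0⟩ := hX
  -- for each n, a normalized isometric embedding of the ball of radius n
  have key : ∀ n : ℕ, ∃ g : {x : X // dist x0 x ≤ (n : ℝ)} → G,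
      (∀ a b, dist (g a) (g b) = dist a.1 b.1) ∧ g ⟨x0, by simp⟩ = 1 := by
    intro n
    have hb : Bornology.IsBounded {x : X | dist x0 x ≤ (n : ℝ)} := by
      exact Metric.isBounded_closedBall.subset
        (fun x hx => by rw [Metric.mem_closedBall, dist_comm]; exact hx)
    obtain ⟨f, hf⟩ := hemb {x : X | dist x0 x ≤ (n : ℝ)} hb
    refine ⟨fun x => (f ⟨x0, by simp⟩)⁻¹ * f x, fun a b => ?_, by simp⟩
    rw [hGinv]
    rw [hf.dist_eq]
    rfl
  choose g hg hg1 using key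
  -- the natural-number distance from the basepoint
  have hN : ∀ x : X, ∃ n : ℕ, dist x0 x = n := fun x => hXi x0 x
  choose N hNspec using hN
  have aux : ∀ (n m : ℕ) (h : n = m) (x : X) (hx : dist x0 x ≤ (n : ℝ)),
      g n ⟨x, hx⟩ = g m ⟨x, by rw [← h]; exact hx⟩ := by
    rintro n _ rfl x hx; rfl
  set F : X → G := fun x => g (N x) ⟨x, le_of_eq (hNspec x)⟩ with hF
  have hdist1 : ∀ x : X, dist (F x) 1 = dist x0 x := by
    intro x
    rw [hF]
    simp only
    rw [← hg1 (N x), hg, dist_comm]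
  -- F is an isometric embedding
  have hiso : ∀ x y : X, dist (F x) (F y) = dist x y := by
    intro x y
    by_cases h : N x = N y
    · have hx : dist x0 x ≤ ((N y : ℕ) : ℝ) := h ▸ le_of_eq (hNspec x)
      have hFx : F x = g (N y) ⟨x, hx⟩ := aux (N x) (N y) h x _
      rw [hFx, hF]
      simp only
      rw [hg]
    · have hne : dist x0 x ≠ dist x0 y := by
        intro hcontra
        apply h
        have := (hNspec x).symm.trans (hcontra.trans (hNspec y))
        exact_mod_cast this
      rcases lt_or_gt_of_ne hne with hlt | hlt
      · -- dist x0 x < dist x0 y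
        have hxy : dist x y = dist x0 y := ultra_isosceles hXu x0 x y hlt
        have hG : dist (F x) (F y) = dist (1 : G) (F y) := by
          apply ultra_isosceles hGu 1 (F x) (F y)
          rw [dist_comm (1:G) (F x), hdist1, dist_comm (1:G) (F y), hdist1]
          exact hlt
        rw [hG, dist_comm (1:G) (F y), hdist1, hxy]
      · have hxy : dist y x = dist x0 x := ultra_isosceles hXu x0 y x hlt
        have hG : dist (F y) (F x) = dist (1 : G) (F x) := by
          apply ultra_isosceles hGu 1 (F y) (F x)
          rw [dist_comm (1:G) (F y), hdist1, dist_comm (1:G) (F x), hdist1]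
          exact hlt
        rw [dist_comm (F x) (F y), hG, dist_comm (1:G) (F x), hdist1, dist_comm x y, hxy]
  refine ⟨F, fun R hR => ⟨R, hR, fun x y hxy => ?_⟩, fun R hR => ⟨R, hR, fun x y hxy => ?_⟩⟩
  · rw [hiso]; exact hxy
  · rw [hiso] at hxy; exact hxy
end

section
/- Suppose (X, d_X) is an integral ultrametric space such that for each natural number n there is a cardinal number c(n) with the property that every ball B(x, n+2), x ∈ X, has cardinality at most c(n). Suppose (G, d_G) is a group with the integral ultrametric induced by an increasing sequence of subgroups {G_n}_{n≥1} (with G_0 = {1_G} and ∪_{n} G_n = G) such that for each n ≥ 1 the cardinality of the set of cosets of G_n in G_{n+1} is at least c(n). Then (X, d_X) coarsely embeds into (G, d_G). -/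
universe u

variable {X : Type u} [MetricSpace X]

/-- The setoid identifying points at distance `≤ n`. -/
def distSetoid (hXu : IsUltra X) (n : ℕ) : Setoid X where
  r x y := dist x y ≤ (n : ℝ)
  iseqv := ⟨fun x => by simp, fun {x y} h => by rwa [dist_comm],
    fun {x y z} h1 h2 => le_trans (hXu x y z) (max_le h1 h2)⟩

theorem distSetoid_mk_eq_iff (hXu : IsUltra X) (n : ℕ) (x y : X) :
    Quotient.mk (distSetoid hXu n) x = Quotient.mk (distSetoid hXu n) y ↔ dist x y ≤ (n : ℝ) :=
  ⟨fun h => Quotient.exact h, fun h => Quotient.sound h⟩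

/-- Natural projection between levels. -/
def pmap (hXu : IsUltra X) (n : ℕ) :
    Quotient (distSetoid hXu n) → Quotient (distSetoid hXu (n + 1)) :=
  Quotient.map id (fun x y h => le_trans h (by push_cast; linarith))

theorem pmap_mk (hXu : IsUltra X) (n : ℕ) (x : X) :
    pmap hXu n (Quotient.mk (distSetoid hXu n) x) = Quotient.mk (distSetoid hXu (n + 1)) x := rfl

theorem exists_level_map {G : Type u} [Group G]
    (hXu : IsUltra X)
    (c : ℕ → Cardinal.{u})
    (hc : ∀ (n : ℕ) (x : X), Cardinal.mk (Metric.closedBall x ((n : ℝ) + 2)) ≤ c n)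
    (Gs : ℕ → Subgroup G)
    (hcosets : ∀ n : ℕ, 1 ≤ n →
      c n ≤ Cardinal.mk (↥(Gs (n + 1)) ⧸ (Gs n).subgroupOf (Gs (n + 1))))
    (x₀ : X) (n : ℕ) :
    ∃ u : Quotient (distSetoid hXu n) → G,
      (∀ a, u a ∈ Gs (n + 2)) ∧
      u (Quotient.mk (distSetoid hXu n) x₀) = 1 ∧
      (∀ a b, pmap hXu n a = pmap hXu n b → a ≠ b → (u a)⁻¹ * u b ∉ Gs (n + 1)) := by
  classical
  set Q := Quotient (distSetoid hXu n)
  set Q' := Quotient (distSetoid hXu (n + 1))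
  set C := (↥(Gs (n + 2)) ⧸ (Gs (n + 1)).subgroupOf (Gs (n + 2)))
  -- cardinality of each fiber of `pmap` is at most `c (n+1)`
  have hcard : ∀ q : Q', Cardinal.mk {a : Q // pmap hXu n a = q} ≤ c (n + 1) := by
    refine Quotient.ind (fun z => ?_)
    set q : Q' := Quotient.mk (distSetoid hXu (n + 1)) z with hq
    have hball : ∀ w : X, pmap hXu n (Quotient.mk (distSetoid hXu n) w) = q →
        w ∈ Metric.closedBall z (((n + 1 : ℕ) : ℝ) + 2) := by
      intro w hw
      rw [pmap_mk, hq, distSetoid_mk_eq_iff] at hw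
      rw [Metric.mem_closedBall]
      refine le_trans hw ?_
      push_cast; linarith
    set F : Metric.closedBall z (((n + 1 : ℕ) : ℝ) + 2) → {a : Q // pmap hXu n a = q} :=
      fun w => if h : pmap hXu n (Quotient.mk (distSetoid hXu n) (w : X)) = q then ⟨_, h⟩
        else ⟨Quotient.mk (distSetoid hXu n) z, rfl⟩ with hF
    have hsurj : Function.Surjective F := by
      rintro ⟨a, ha⟩
      obtain ⟨w, rfl⟩ := Quotient.exists_rep a
      refine ⟨⟨w, hball w ha⟩, ?_⟩
      rw [hF]; simp only [dif_pos ha]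
    exact le_trans (Cardinal.mk_le_of_surjective hsurj) (hc (n + 1) z)
  have hfib : ∀ q : Q', Nonempty ({a : Q // pmap hXu n a = q} ↪ C) := fun q =>
    Cardinal.le_def _ _ |>.mp (le_trans (hcard q) (hcosets (n + 1) (by omega)))
  set e : ∀ q : Q', {a : Q // pmap hXu n a = q} ↪ C := fun q => (hfib q).some with he
  -- a witness in each fiber
  set wit : ∀ q : Q', {a : Q // pmap hXu n a = q} := fun q =>
    ⟨Quotient.mk (distSetoid hXu n) q.out, by rw [pmap_mk]; exact Quotient.out_eq q⟩ with hwit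
  set q₀ : Q' := Quotient.mk (distSetoid hXu (n + 1)) x₀ with hq₀
  set aq : ∀ q : Q', {a : Q // pmap hXu n a = q} := fun q =>
    if h : q = q₀ then ⟨Quotient.mk (distSetoid hXu n) x₀, by rw [h]; exact rfl⟩ else wit q
    with haq
  set e₀ : C := QuotientGroup.mk 1 with he₀
  set ι : ∀ q : Q', {a : Q // pmap hXu n a = q} → C :=
    fun q a => Equiv.swap (e q (aq q)) e₀ (e q a) with hι
  have hιinj : ∀ q, Function.Injective (ι q) := fun q =>
    (Equiv.injective _).comp (e q).injective
  have hιa : ∀ q, ι q (aq q) = e₀ := fun q => Equiv.swap_apply_left _ _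
  set s : C → ↥(Gs (n + 2)) := fun cc => if cc = e₀ then 1 else Quotient.out cc with hs
  have hsmk : ∀ cc : C, QuotientGroup.mk (s cc) = cc := by
    intro cc
    by_cases h : cc = e₀
    · rw [hs]; simp only [if_pos h, h, he₀]; rfl
    · rw [hs]; simp only [if_neg h]; exact Quotient.out_eq cc
  have hs0 : s e₀ = 1 := if_pos rfl
  set ι' : Q → C := fun a => ι (pmap hXu n a) ⟨a, rfl⟩ with hι'
  have hι'gen : ∀ (a : Q) (q : Q') (h : pmap hXu n a = q), ι' a = ι q ⟨a, h⟩ := by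
    rintro a q rfl; rfl
  have hι'inj : ∀ a b : Q, pmap hXu n a = pmap hXu n b → ι' a = ι' b → a = b := by
    intro a b h hab
    rw [hι'gen a (pmap hXu n a) rfl, hι'gen b (pmap hXu n a) h.symm] at hab
    have := hιinj _ hab
    exact congrArg Subtype.val this
  have hι'0 : ι' (Quotient.mk (distSetoid hXu n) x₀) = e₀ := by
    have h1 : aq q₀ = (⟨Quotient.mk (distSetoid hXu n) x₀, rfl⟩ :
        {a : Q // pmap hXu n a = q₀}) := dif_pos rfl
    rw [hι'gen (Quotient.mk (distSetoid hXu n) x₀) q₀ rfl, ← h1, hιa]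
  refine ⟨fun a => ((s (ι' a) : ↥(Gs (n + 2))) : G), fun a => (s (ι' a)).2, ?_, ?_⟩
  · show ((s (ι' (Quotient.mk (distSetoid hXu n) x₀)) : ↥(Gs (n + 2))) : G) = 1
    rw [hι'0, hs0]; rfl
  · intro a b hpab hne hmem
    have hne' : ι' a ≠ ι' b := fun h => hne (hι'inj a b hpab h)
    have hmem' : (s (ι' a))⁻¹ * s (ι' b) ∈ (Gs (n + 1)).subgroupOf (Gs (n + 2)) := by
      rw [Subgroup.mem_subgroupOf]
      exact hmem
    have : QuotientGroup.mk (s (ι' a)) = (QuotientGroup.mk (s (ι' b)) : C) :=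
      QuotientGroup.eq.mpr hmem'
    rw [hsmk, hsmk] at this
    exact hne' this

/-- Iterated product `g (n-1) x * ⋯ * g 0 x`. -/
def prodSeq {X : Type u} {G : Type u} [Group G] (g : ℕ → X → G) : ℕ → X → G
  | 0, _ => 1
  | n + 1, x => g n x * prodSeq g n x

theorem prodSeq_mem {G : Type u} [Group G] (g : ℕ → X → G) (Gs : ℕ → Subgroup G)
    (hGmono : Monotone Gs) (x : X) (hg : ∀ k, g k x ∈ Gs (k + 2)) :
    ∀ n, prodSeq g n x ∈ Gs (n + 1)
  | 0 => one_mem _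
  | n + 1 => mul_mem (hg n) (hGmono (by omega) (prodSeq_mem g Gs hGmono x hg n))

theorem prodSeq_stable {G : Type u} [Group G] (g : ℕ → X → G) (x : X) (n : ℕ)
    (hg : ∀ k, n ≤ k → g k x = 1) :
    ∀ m, n ≤ m → prodSeq g m x = prodSeq g n x := by
  intro m hm
  induction m, hm using Nat.le_induction with
  | base => rfl
  | succ m hm ih => show g m x * prodSeq g m x = _; rw [hg m hm, one_mul, ih]

theorem prodSeq_split {G : Type u} [Group G] (g : ℕ → X → G) (x y : X) (n : ℕ) :
    ∀ m, n ≤ m → (∀ k, n ≤ k → k < m → g k x = g k y) →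
      (prodSeq g m x)⁻¹ * prodSeq g m y = (prodSeq g n x)⁻¹ * prodSeq g n y := by
  intro m hm
  induction m, hm using Nat.le_induction with
  | base => intro _; rfl
  | succ m hm ih =>
    intro heq
    show (g m x * prodSeq g m x)⁻¹ * (g m y * prodSeq g m y) = _
    rw [heq m hm (by omega), mul_inv_rev, mul_assoc, inv_mul_cancel_left]
    exact ih (fun k h1 h2 => heq k h1 (by omega))

theorem coarseEmbedding_into_inducedUltrametric_group' {X G : Type u}
    [MetricSpace X] [Group G] [MetricSpace G]
    (hXu : IsUltra X) (hXi : IsIntegralDist X)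
    (c : ℕ → Cardinal.{u})
    (hc : ∀ (n : ℕ) (x : X), Cardinal.mk (Metric.closedBall x ((n : ℝ) + 2)) ≤ c n)
    (Gs : ℕ → Subgroup G) (hG0 : Gs 0 = ⊥) (hGmono : Monotone Gs)
    (hGunion : ∀ g : G, ∃ n : ℕ, g ∈ Gs n)
    (hGdist : ∀ (g h : G) (n : ℕ), dist g h ≤ (n : ℝ) ↔ g⁻¹ * h ∈ Gs n)
    (hGi : IsIntegralDist G)
    (hcosets : ∀ n : ℕ, 1 ≤ n →
      c n ≤ Cardinal.mk (↥(Gs (n + 1)) ⧸ (Gs n).subgroupOf (Gs (n + 1)))) :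
    ∃ f : X → G, (∀ R : ℝ, R > 0 → ∃ S' : ℝ, S' > 0 ∧ ∀ x y : X, dist x y ≤ R → dist (f x) (f y) ≤ S') ∧
  (∀ R : ℝ, R > 0 → ∃ S' : ℝ, S' > 0 ∧ ∀ x y : X, dist (f x) (f y) ≤ R → dist x y ≤ S') := by
  classical
  rcases isEmpty_or_nonempty X with hX | ⟨⟨x₀⟩⟩
  · exact ⟨fun x => isEmptyElim x, fun R hR => ⟨1, one_pos, fun x => isEmptyElim x⟩,
      fun R hR => ⟨1, one_pos, fun x => isEmptyElim x⟩⟩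
  choose U hU1 hU2 hU3 using fun n => exists_level_map hXu c hc Gs hcosets x₀ n
  set g : ℕ → X → G := fun n x => U n (Quotient.mk (distSetoid hXu n) x) with hgdef
  have hg_mem : ∀ n x, g n x ∈ Gs (n + 2) := fun n x => hU1 n _
  have hg_eq : ∀ (n : ℕ) (x y : X), dist x y ≤ (n : ℝ) → g n x = g n y := fun n x y h =>
    congrArg (U n) (Quotient.sound h)
  have hg_one : ∀ (n : ℕ) (x : X), dist x x₀ ≤ (n : ℝ) → g n x = 1 := fun n x h =>
    (congrArg (U n) (Quotient.sound h)).trans (hU2 n)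
  have hg_ne : ∀ (n : ℕ) (x y : X), dist x y ≤ ((n + 1 : ℕ) : ℝ) → ¬ dist x y ≤ (n : ℝ) →
      (g n x)⁻¹ * g n y ∉ Gs (n + 1) := by
    intro n x y h1 h2
    refine hU3 n _ _ ?_ ?_
    · rw [pmap_mk, pmap_mk]
      exact Quotient.sound h1
    · intro he
      exact h2 (Quotient.exact he)
  -- the nat-valued distance to the basepoint
  set D : X → ℕ := fun x => Classical.choose (hXi x x₀) with hDdef
  have hD : ∀ x : X, dist x x₀ = (D x : ℝ) := fun x => Classical.choose_spec (hXi x x₀)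
  set f : X → G := fun x => prodSeq g (D x) x with hfdef
  have hf_stable : ∀ (x : X) (m : ℕ), D x ≤ m → prodSeq g m x = f x := by
    intro x m hm
    exact prodSeq_stable g x (D x) (fun k hk => hg_one k x (by rw [hD x]; exact_mod_cast hk)) m hm
  have hf_diff : ∀ (x y : X) (n : ℕ), dist x y ≤ (n : ℝ) →
      (f x)⁻¹ * f y = (prodSeq g n x)⁻¹ * prodSeq g n y := by
    intro x y n h
    set m := max (max (D x) (D y)) n with hm
    rw [← hf_stable x m (by omega), ← hf_stable y m (by omega)]
    refine prodSeq_split g x y n m (by omega) ?_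
    intro k hk _
    exact hg_eq k x y (le_trans h (by exact_mod_cast hk))
  have key_mem : ∀ (x y : X) (n : ℕ), dist x y ≤ (n : ℝ) → (f x)⁻¹ * f y ∈ Gs (n + 1) := by
    intro x y n h
    rw [hf_diff x y n h]
    exact mul_mem (inv_mem (prodSeq_mem g Gs hGmono x (hg_mem · x) n))
      (prodSeq_mem g Gs hGmono y (hg_mem · y) n)
  have key_nmem : ∀ (x y : X) (k : ℕ), dist x y = ((k + 1 : ℕ) : ℝ) →
      (f x)⁻¹ * f y ∉ Gs (k + 1) := by
    intro x y k hxy hmem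
    have h1 : dist x y ≤ ((k + 1 : ℕ) : ℝ) := le_of_eq hxy
    rw [hf_diff x y (k + 1) h1] at hmem
    have hPx : prodSeq g k x ∈ Gs (k + 1) := prodSeq_mem g Gs hGmono x (hg_mem · x) k
    have hPy : prodSeq g k y ∈ Gs (k + 1) := prodSeq_mem g Gs hGmono y (hg_mem · y) k
    have hstep : (prodSeq g (k + 1) x)⁻¹ * prodSeq g (k + 1) y
        = (prodSeq g k x)⁻¹ * ((g k x)⁻¹ * g k y) * prodSeq g k y := by
      show (g k x * prodSeq g k x)⁻¹ * (g k y * prodSeq g k y) = _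
      group
    rw [hstep] at hmem
    have : (g k x)⁻¹ * g k y ∈ Gs (k + 1) := by
      have := mul_mem (mul_mem hPx hmem) (inv_mem hPy)
      convert this using 1
      group
    refine hg_ne k x y h1 ?_ this
    rw [hxy]
    push_cast
    intro hle
    linarith
  refine ⟨f, ?_, ?_⟩
  · intro R hR
    refine ⟨(⌈R⌉₊ : ℝ) + 1, by positivity, fun x y h => ?_⟩
    have h1 : dist x y ≤ (⌈R⌉₊ : ℝ) := le_trans h (Nat.le_ceil R)
    have h2 := key_mem x y ⌈R⌉₊ h1
    have h3 := (hGdist (f x) (f y) (⌈R⌉₊ + 1)).mpr h2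
    push_cast at h3 ⊢
    linarith
  · intro R hR
    refine ⟨(⌈R⌉₊ : ℝ) + 1, by positivity, fun x y h => ?_⟩
    obtain ⟨m, hm⟩ := hXi x y
    by_contra hcon
    push_neg at hcon
    -- then m ≥ ⌈R⌉₊ + 2, write m = k + 1
    have hmge : ⌈R⌉₊ + 2 ≤ m := by
      by_contra hmlt
      push_neg at hmlt
      have : dist x y ≤ (⌈R⌉₊ : ℝ) + 1 := by
        rw [hm]
        have : m ≤ ⌈R⌉₊ + 1 := by omega
        exact_mod_cast this
      linarith
    obtain ⟨k, rfl⟩ : ∃ k, m = k + 1 := ⟨m - 1, by omega⟩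
    have hnm := key_nmem x y k (by exact_mod_cast hm)
    have h4 : ¬ dist (f x) (f y) ≤ ((k + 1 : ℕ) : ℝ) := fun hle =>
      hnm ((hGdist (f x) (f y) (k + 1)).mp hle)
    refine h4 (le_trans h ?_)
    have : R ≤ (⌈R⌉₊ : ℝ) := Nat.le_ceil R
    have : ((⌈R⌉₊ : ℕ) : ℝ) ≤ ((k + 1 : ℕ) : ℝ) := by exact_mod_cast (by omega : ⌈R⌉₊ ≤ k + 1)
    linarith


/-- Corollary 6.6: let `(X, d_X)` be an integral ultrametric space such that for each `n`
there is a cardinal `c n` bounding the cardinality of every ball `B(x, n + 2)` in `X`.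
Let `(G, d_G)` be a group with the integral ultrametric induced by an increasing sequence of
subgroups `Gs n` (with `Gs 0 = ⊥` and `⋃ n, Gs n = G`, so that `dist g h ≤ n ↔ g⁻¹h ∈ Gs n`)
such that for each `n ≥ 1` the cardinality of the set of cosets of `Gs n` in `Gs (n+1)` is at
least `c n`.  Then `X` coarsely embeds into `G`. -/
theorem coarseEmbedding_into_inducedUltrametric_group {X G : Type u}
    [MetricSpace X] [Group G] [MetricSpace G]
    (hXu : IsUltra X) (hXi : IsIntegralDist X)
    (c : ℕ → Cardinal.{u})
    (hc : ∀ (n : ℕ) (x : X), Cardinal.mk (Metric.closedBall x ((n : ℝ) + 2)) ≤ c n)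
    (Gs : ℕ → Subgroup G) (hG0 : Gs 0 = ⊥) (hGmono : Monotone Gs)
    (hGunion : ∀ g : G, ∃ n : ℕ, g ∈ Gs n)
    (hGdist : ∀ (g h : G) (n : ℕ), dist g h ≤ (n : ℝ) ↔ g⁻¹ * h ∈ Gs n)
    (hGi : IsIntegralDist G)
    (hcosets : ∀ n : ℕ, 1 ≤ n →
      c n ≤ Cardinal.mk (↥(Gs (n + 1)) ⧸ (Gs n).subgroupOf (Gs (n + 1)))) :
    ∃ f : X → G, CoarseEmbedding f := by
  obtain ⟨f, h1, h2⟩ := coarseEmbedding_into_inducedUltrametric_group' hXu hXi c hc Gs hG0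
    hGmono hGunion hGdist hGi hcosets
  exact ⟨f, h1, h2⟩
end

section
/- Suppose G is a countable group that is the union of a strictly increasing sequence of its finite subgroups {G_i}_{i≥1}. Then there is a proper left-invariant integral ultrametric d_G on G such that every metric space of bounded geometry that has asymptotic dimension 0 coarsely embeds into (G, d_G). -/
/-- The metric of the group `G` is left-invariant. -/
def LeftInvariantDist (G : Type*) [Group G] [MetricSpace G] : Prop :=
  ∀ g x y : G, dist (g * x) (g * y) = dist x y

/-- A metric space has bounded geometry if there is `ε > 0` such that for every `r > 0` there
is a uniform finite bound on the number of points in a ball of radius `r` that are pairwise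
at distance at least `ε`. -/
def BoundedGeometry (X : Type*) [MetricSpace X] : Prop :=
  ∃ ε : ℝ, ε > 0 ∧ ∀ r : ℝ, r > 0 → ∃ N : ℕ, ∀ (x : X) (F : Finset X),
    (↑F ⊆ Metric.ball x r) → (∀ p ∈ F, ∀ q ∈ F, p ≠ q → ε ≤ dist p q) → F.card ≤ N

/-! The metric is `d(x, y) = 1 + min {i | x⁻¹ y ∈ G_i}` for `x ≠ y`, so its closed balls of
radius `k + 1` are the cosets `x G_k`. On a space `X` of bounded geometry and asymptotic
dimension `0`, the `(ε + n)`-chain relations form a nested sequence of equivalence relations with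
uniformly bounded classes, and bounded geometry bounds by some `N n` the number of level-`n` classes inside a
level-`(n + 1)` class. After well-ordering `X`, numbering the level-`n` classes inside each
level-`(n + 1)` class by the order of their least elements gives every point an address
`q x : ℕ → ℕ` with `q x n < N n`, eventually `0`, such that `x` and `y` are `n`-chain related iff
their addresses agree from `n` on. On the group side, pass to subgroups `G_{m n}` whose successive
indices exceed `N n`, choose coset representatives `t n 0 = 1, …, t n (N n - 1)` of `G_{m n}` in
`G_{m (n + 1)}`, and send `x` to the finite product `⋯ * t 1 (q x 1) * t 0 (q x 0)`. Then
`f(x)⁻¹ f(y) ∈ G_{m n}` iff the addresses of `x` and `y` agree from `n` on, which makes `f` a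
coarse embedding. -/

open Filter

theorem finite_and_ncard_le_of_forall_finset {α : Type*} {s : Set α} {N : ℕ}
    (h : ∀ F : Finset α, ↑F ⊆ s → F.card ≤ N) : s.Finite ∧ s.ncard ≤ N := by
  have hs : s.Finite := by
    by_contra hinf
    obtain ⟨F, hFs, hF⟩ := Set.Infinite.exists_subset_card_eq hinf (N + 1)
    exact (h F hFs).not_gt (hF ▸ N.lt_succ_self)
  exact ⟨hs, Set.ncard_eq_toFinset_card s hs ▸ h hs.toFinset (by simp)⟩

theorem strictMonoOn_ncard_sep_lt {α : Type*} [LinearOrder α] {s : Set α} (hs : s.Finite) :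
    StrictMonoOn (fun a => {b ∈ s | b < a}.ncard) s := fun a ha _ _ hab =>
  Set.ncard_lt_ncard ⟨fun _ hc => ⟨hc.1, hc.2.trans hab⟩, fun h => lt_irrefl a (h ⟨ha, hab⟩).2⟩
    (hs.subset (Set.sep_subset _ _))

section ChainMetric

variable {G : Type*} [Group G]

/-- Junk value `0` when `g` lies in no `Gs i`. -/
noncomputable def chainLevel (Gs : ℕ → Subgroup G) (g : G) : ℕ :=
  sInf {i | g ∈ Gs i}

theorem chainLevel_inv (Gs : ℕ → Subgroup G) (g : G) : chainLevel Gs g⁻¹ = chainLevel Gs g := by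
  simp only [chainLevel, inv_mem_iff]

open scoped Classical in
noncomputable def chainNorm (Gs : ℕ → Subgroup G) (g : G) : ℕ :=
  if g = 1 then 0 else chainLevel Gs g + 1

theorem chainNorm_inv (Gs : ℕ → Subgroup G) (g : G) : chainNorm Gs g⁻¹ = chainNorm Gs g := by
  unfold chainNorm
  split_ifs <;> simp_all [chainLevel_inv]

theorem chainNorm_eq_zero {Gs : ℕ → Subgroup G} {g : G} : chainNorm Gs g = 0 ↔ g = 1 := by
  unfold chainNorm
  split_ifs with h <;> simp [h]

variable {Gs : ℕ → Subgroup G}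

theorem chainLevel_le_iff (hmono : Monotone Gs) (hunion : ∀ g, ∃ i, g ∈ Gs i) {g : G} {k : ℕ} :
    chainLevel Gs g ≤ k ↔ g ∈ Gs k :=
  ⟨fun h => hmono h (Nat.sInf_mem (hunion g)), fun h => Nat.sInf_le h⟩

theorem chainNorm_le_succ_iff (hmono : Monotone Gs) (hunion : ∀ g, ∃ i, g ∈ Gs i) {g : G}
    {k : ℕ} : chainNorm Gs g ≤ k + 1 ↔ g ∈ Gs k := by
  unfold chainNorm
  split_ifs with h
  · simp [h, one_mem]
  · simp [chainLevel_le_iff hmono hunion]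

theorem chainNorm_mul_le (hmono : Monotone Gs) (hunion : ∀ g, ∃ i, g ∈ Gs i) (g h : G) :
    chainNorm Gs (g * h) ≤ max (chainNorm Gs g) (chainNorm Gs h) := by
  cases hmax : max (chainNorm Gs g) (chainNorm Gs h) with
  | zero =>
    obtain ⟨hg, hh⟩ := Nat.max_eq_zero_iff.1 hmax
    simp [chainNorm_eq_zero.1 hg, chainNorm_eq_zero.1 hh, chainNorm]
  | succ k =>
    rw [chainNorm_le_succ_iff hmono hunion]
    exact mul_mem ((chainNorm_le_succ_iff hmono hunion).1 (hmax ▸ le_max_left _ _))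
      ((chainNorm_le_succ_iff hmono hunion).1 (hmax ▸ le_max_right _ _))

theorem chainNorm_inv_mul_le (hmono : Monotone Gs) (hunion : ∀ g, ∃ i, g ∈ Gs i) (x y z : G) :
    chainNorm Gs (x⁻¹ * z) ≤ max (chainNorm Gs (x⁻¹ * y)) (chainNorm Gs (y⁻¹ * z)) := by
  simpa [mul_assoc] using chainNorm_mul_le hmono hunion (x⁻¹ * y) (y⁻¹ * z)

@[reducible] noncomputable def chainMetricSpace (hmono : Monotone Gs)
    (hunion : ∀ g, ∃ i, g ∈ Gs i) : MetricSpace G where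
  dist x y := chainNorm Gs (x⁻¹ * y)
  dist_self x := by simp [chainNorm]
  dist_comm x y := by rw [← chainNorm_inv, mul_inv_rev, inv_inv]
  dist_triangle x y z := by
    have h : (chainNorm Gs (x⁻¹ * z) : ℝ) ≤
        max (chainNorm Gs (x⁻¹ * y) : ℝ) (chainNorm Gs (y⁻¹ * z)) := by
      exact_mod_cast chainNorm_inv_mul_le hmono hunion x y z
    exact h.trans (max_le_add_of_nonneg (Nat.cast_nonneg _) (Nat.cast_nonneg _))
  eq_of_dist_eq_zero {x y} h := by
    rw [← inv_mul_eq_one, ← chainNorm_eq_zero (Gs := Gs)]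
    exact_mod_cast h

variable (hmono : Monotone Gs) (hunion : ∀ g, ∃ i, g ∈ Gs i)

theorem leftInvariantDist_chainMetricSpace :
    letI := chainMetricSpace hmono hunion
    LeftInvariantDist G := fun g x y => by
  show (chainNorm Gs ((g * x)⁻¹ * (g * y)) : ℝ) = chainNorm Gs (x⁻¹ * y)
  rw [mul_inv_rev, mul_assoc, inv_mul_cancel_left]

theorem isUltra_chainMetricSpace :
    letI := chainMetricSpace hmono hunion
    IsUltra G := fun x y z => by
  show (chainNorm Gs (x⁻¹ * z) : ℝ) ≤ max (chainNorm Gs (x⁻¹ * y) : ℝ) (chainNorm Gs (y⁻¹ * z))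
  exact_mod_cast chainNorm_inv_mul_le hmono hunion x y z

theorem isIntegralDist_chainMetricSpace :
    letI := chainMetricSpace hmono hunion
    IsIntegralDist G := fun x y => ⟨chainNorm Gs (x⁻¹ * y), rfl⟩

theorem chainMetricSpace_dist_le_succ_iff :
    letI := chainMetricSpace hmono hunion
    ∀ (k : ℕ) (x y : G), dist x y ≤ k + 1 ↔ x⁻¹ * y ∈ Gs k := fun k x y => by
  show (chainNorm Gs (x⁻¹ * y) : ℝ) ≤ k + 1 ↔ _
  exact_mod_cast chainNorm_le_succ_iff hmono hunion

theorem properSpace_chainMetricSpace (hfin : ∀ i, (Gs i : Set G).Finite) :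
    letI := chainMetricSpace hmono hunion
    ProperSpace G := by
  let := chainMetricSpace hmono hunion
  refine ⟨fun x r => Set.Finite.isCompact ?_⟩
  refine ((hfin ⌈r⌉₊).preimage (mul_right_injective x⁻¹).injOn).subset fun y hy => ?_
  refine (chainMetricSpace_dist_le_succ_iff hmono hunion _ x y).1 ?_
  rw [Metric.mem_closedBall, dist_comm] at hy
  linarith [Nat.le_ceil r]

end ChainMetric

section CosetProd

variable {G : Type*} [Group G]

theorem exists_cosetReps {H K : Subgroup G} (hHK : H ≤ K) [Finite K] {c : ℕ}
    (hc : c * Nat.card H ≤ Nat.card K) :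
    ∃ t : ℕ → G, (∀ b, t b ∈ K) ∧ t 0 = 1 ∧
      ∀ b < c, ∀ b' < c, (t b)⁻¹ * t b' ∈ H → b = b' := by
  set H' := H.subgroupOf K
  have : Finite H := Finite.of_injective _ (Subgroup.inclusion_injective hHK)
  have hcard : Nat.card K = Nat.card (K ⧸ H') * Nat.card H := by
    rw [← H'.card_mul_index, H'.index_eq_card, mul_comm,
      Nat.card_congr (Subgroup.subgroupOfEquivOfLe hHK).toEquiv]
  have hc' : c ≤ Nat.card (K ⧸ H') :=
    Nat.le_of_mul_le_mul_right (hcard ▸ hc) Nat.card_pos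
  let e := Finite.equivFin (K ⧸ H')
  let s : ℕ → K := fun b => if h : b < Nat.card (K ⧸ H') then (e.symm ⟨b, h⟩).out else 1
  refine ⟨fun b => ((s 0)⁻¹ * s b : K), fun b => Subtype.prop _, by simp, fun b hb b' hb' h => ?_⟩
  have hs : (s b)⁻¹ * s b' ∈ H' := by
    rw [Subgroup.mem_subgroupOf]
    simpa [mul_assoc] using h
  simpa only [s, dif_pos (hb.trans_le hc'), dif_pos (hb'.trans_le hc'), QuotientGroup.out_eq',
    e.symm.apply_eq_iff_eq, Fin.mk.injEq] using QuotientGroup.eq.2 hs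

theorem exists_cosetReps_tower {Gs : ℕ → Subgroup G} (hmono : StrictMono Gs)
    (hfin : ∀ i, (Gs i : Set G).Finite) (N : ℕ → ℕ) :
    ∃ m : ℕ → ℕ, StrictMono m ∧ ∃ t : ℕ → ℕ → G, (∀ j b, t j b ∈ Gs (m (j + 1))) ∧
      (∀ j, t j 0 = 1) ∧
      ∀ j, ∀ b < N j, ∀ b' < N j, (t j b)⁻¹ * t j b' ∈ Gs (m j) → b = b' := by
  have hcard : StrictMono fun i => Nat.card (Gs i) := fun i j hij =>
    Set.ncard_lt_ncard (SetLike.coe_ssubset_coe.2 (hmono hij)) (hfin j)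
  -- `|Gs i| ≥ i`, so taking `m (j + 1) ≥ N j * |Gs (m j)|` leaves room for `N j` cosets
  let m : ℕ → ℕ := fun n => Nat.rec 0 (fun j mj => mj + 1 + N j * Nat.card (Gs mj)) n
  have hm_succ (j : ℕ) : m (j + 1) = m j + 1 + N j * Nat.card (Gs (m j)) := rfl
  have hm : StrictMono m := strictMono_nat_of_lt_succ fun j => by rw [hm_succ]; omega
  have hreps (j : ℕ) := by
    have : Finite (Gs (m (j + 1))) := (hfin _).to_subtype
    refine exists_cosetReps (hmono.monotone (hm.monotone j.le_succ)) (c := N j) ?_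
    calc N j * Nat.card (Gs (m j)) ≤ m (j + 1) := by rw [hm_succ]; omega
      _ ≤ Nat.card (Gs (m (j + 1))) := hcard.le_apply
  choose t ht_mem ht_one ht_inj using hreps
  exact ⟨m, hm, t, ht_mem, ht_one, ht_inj⟩

def cosetProd (t : ℕ → ℕ → G) (a : ℕ → ℕ) : ℕ → G
  | 0 => 1
  | K + 1 => t K (a K) * cosetProd t a K

variable {H : ℕ → Subgroup G} {t : ℕ → ℕ → G}

theorem cosetProd_mem (hH : Monotone H) (ht : ∀ j b, t j b ∈ H (j + 1)) (a : ℕ → ℕ) :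
    ∀ K, cosetProd t a K ∈ H K
  | 0 => one_mem _
  | K + 1 => mul_mem (ht K _) (hH K.le_succ (cosetProd_mem hH ht a K))

theorem cosetProd_eq_of_le (ht : ∀ j, t j 0 = 1) {a : ℕ → ℕ} {K M : ℕ} (ha : ∀ j ≥ K, a j = 0)
    (hKM : K ≤ M) : cosetProd t a M = cosetProd t a K := by
  induction M, hKM using Nat.le_induction with
  | base => rfl
  | succ M hKM ih => rw [cosetProd, ha M hKM, ht, one_mul, ih]

theorem cosetProd_inv_mul_mem_iff {N : ℕ → ℕ} (hH : Monotone H)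
    (ht_mem : ∀ j b, t j b ∈ H (j + 1))
    (ht_inj : ∀ j, ∀ b < N j, ∀ b' < N j, (t j b)⁻¹ * t j b' ∈ H j → b = b')
    {a b : ℕ → ℕ} (ha : ∀ j, a j < N j) (hb : ∀ j, b j < N j) (n : ℕ) :
    ∀ K, (cosetProd t a K)⁻¹ * cosetProd t b K ∈ H n ↔ ∀ j, n ≤ j → j < K → a j = b j
  | 0 => by simp [cosetProd]
  | K + 1 => by
    have ih := cosetProd_inv_mul_mem_iff hH ht_mem ht_inj ha hb n K
    have hsucc : (cosetProd t a (K + 1))⁻¹ * cosetProd t b (K + 1) =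
        (cosetProd t a K)⁻¹ * ((t K (a K))⁻¹ * t K (b K)) * cosetProd t b K := by
      simp only [cosetProd]; group
    by_cases hK : a K = b K
    · rw [hsucc, hK, inv_mul_cancel, mul_one, ih]
      exact ⟨fun h j hnj hjK => (Nat.lt_succ_iff_lt_or_eq.1 hjK).elim (h j hnj) (· ▸ hK),
        fun h j hnj hjK => h j hnj (hjK.trans K.lt_succ_self)⟩
    by_cases hnK : n ≤ K
    · refine iff_of_false (fun hmem => hK (ht_inj K _ (ha K) _ (hb K) ?_))
        fun h => hK (h K hnK K.lt_succ_self)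
      -- both partial products lie in `H K`, so the middle factor does too
      have hmemK := hH hnK (hsucc ▸ hmem)
      have hA := cosetProd_mem hH ht_mem a K
      have hB := cosetProd_mem hH ht_mem b K
      simpa [mul_assoc] using mul_mem (mul_mem hA hmemK) (inv_mem hB)
    · have hmem := mul_mem (inv_mem (cosetProd_mem hH ht_mem a (K + 1)))
        (cosetProd_mem hH ht_mem b (K + 1))
      exact iff_of_true (hH (not_le.1 hnK) hmem)
        fun j hnj hjK => absurd (hnj.trans (Nat.lt_succ_iff.1 hjK)) hnK

end CosetProd

theorem exists_addressMap {G : Type*} [Group G] {Gs : ℕ → Subgroup G} (hmono : StrictMono Gs)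
    (hfin : ∀ i, (Gs i : Set G).Finite) (N : ℕ → ℕ) :
    ∃ m : ℕ → ℕ, StrictMono m ∧ ∃ φ : (ℕ → ℕ) → G, ∀ a b : ℕ → ℕ,
      (∀ j, a j < N j) → (∀ j, b j < N j) →
      (∀ᶠ j in atTop, a j = 0) → (∀ᶠ j in atTop, b j = 0) →
      ∀ n, (φ a)⁻¹ * φ b ∈ Gs (m n) ↔ ∀ j ≥ n, a j = b j := by
  obtain ⟨m, hm, t, ht_mem, ht_one, ht_inj⟩ := exists_cosetReps_tower hmono hfin N
  let supp : (ℕ → ℕ) → ℕ := fun a => sInf {K | ∀ j ≥ K, a j = 0}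
  refine ⟨m, hm, fun a => cosetProd t a (supp a), fun a b ha hb ha0 hb0 n => ?_⟩
  replace ha0 : ∀ j ≥ supp a, a j = 0 := Nat.sInf_mem (eventually_atTop.1 ha0)
  replace hb0 : ∀ j ≥ supp b, b j = 0 := Nat.sInf_mem (eventually_atTop.1 hb0)
  dsimp only
  rw [← cosetProd_eq_of_le ht_one ha0 (le_max_left _ (supp b)),
    ← cosetProd_eq_of_le ht_one hb0 (le_max_right (supp a) _),
    cosetProd_inv_mul_mem_iff (H := fun j => Gs (m j)) (hmono.monotone.comp hm.monotone) ht_mem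
      ht_inj ha hb]
  refine ⟨fun h j hnj => ?_, fun h j hnj _ => h j hnj⟩
  by_cases hj : j < max (supp a) (supp b)
  · exact h j hnj hj
  · rw [ha0 j (le_of_max_le_left (not_lt.1 hj)), hb0 j (le_of_max_le_right (not_lt.1 hj))]

structure EquivTower (X : Type*) where
  rel : ℕ → X → X → Prop
  equivalence : ∀ n, Equivalence (rel n)
  rel_succ : ∀ {n : ℕ} {x y : X}, rel n x y → rel (n + 1) x y
  exists_rel : ∀ x y, ∃ n, rel n x y

namespace EquivTower

variable {X : Type*} (T : EquivTower X)

theorem rel_mono {m n : ℕ} (hmn : m ≤ n) {x y : X} (h : T.rel m x y) : T.rel n x y := by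
  induction n, hmn using Nat.le_induction with
  | base => exact h
  | succ n _ ih => exact T.rel_succ ih

/-- Every class of `T.rel (n + 1)` meets at most `N n` classes of `T.rel n`. -/
def BranchingBounded (N : ℕ → ℕ) : Prop :=
  ∀ n x (F : Finset X), (∀ p ∈ F, T.rel (n + 1) x p) →
    (∀ p ∈ F, ∀ p' ∈ F, T.rel n p p' → p = p') → F.card ≤ N n

section Leader

variable [LinearOrder X] [WellFoundedLT X]

noncomputable def leader (n : ℕ) (x : X) : X :=
  wellFounded_lt.min {y | T.rel n x y} ⟨x, (T.equivalence n).refl x⟩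

theorem rel_leader (n : ℕ) (x : X) : T.rel n x (T.leader n x) :=
  wellFounded_lt.min_mem _ _

theorem leader_le {n : ℕ} {x y : X} (h : T.rel n x y) : T.leader n x ≤ y :=
  wellFounded_lt.min_le h

theorem leader_eq_iff {n : ℕ} {x y : X} : T.leader n x = T.leader n y ↔ T.rel n x y := by
  have e := T.equivalence n
  refine ⟨fun h => e.trans (T.rel_leader n x) (h ▸ e.symm (T.rel_leader n y)), fun h => ?_⟩
  exact le_antisymm (T.leader_le (e.trans h (T.rel_leader n y)))
    (T.leader_le (e.trans (e.symm h) (T.rel_leader n x)))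

theorem leader_leader (n : ℕ) (x : X) : T.leader n (T.leader n x) = T.leader n x :=
  T.leader_eq_iff.2 ((T.equivalence n).symm (T.rel_leader n x))

theorem leader_succ_le (n : ℕ) (x : X) : T.leader (n + 1) x ≤ T.leader n x :=
  T.leader_le (T.rel_succ (T.rel_leader n x))

def leaders (n : ℕ) (x : X) : Set X :=
  T.leader n '' {y | T.rel (n + 1) x y}

/-- Numbers the `T.rel n`-classes inside each `T.rel (n + 1)`-class by `0, 1, …` in the order
of their least elements. -/
noncomputable def label (n : ℕ) (x : X) : ℕ :=
  {l ∈ T.leaders n x | l < T.leader n x}.ncard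

theorem leader_mem_leaders (n : ℕ) (x : X) : T.leader n x ∈ T.leaders n x :=
  ⟨x, (T.equivalence _).refl x, rfl⟩

theorem leaders_eq_of_rel {n : ℕ} {x y : X} (h : T.rel (n + 1) x y) :
    T.leaders n x = T.leaders n y := by
  have e := T.equivalence (n + 1)
  have hxy : {z | T.rel (n + 1) x z} = {z | T.rel (n + 1) y z} :=
    Set.ext fun z => ⟨e.trans (e.symm h), e.trans h⟩
  rw [leaders, leaders, hxy]

theorem leaders_finite_ncard_le {N : ℕ → ℕ} (hN : T.BranchingBounded N) (n : ℕ) (x : X) :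
    (T.leaders n x).Finite ∧ (T.leaders n x).ncard ≤ N n := by
  refine finite_and_ncard_le_of_forall_finset fun F hF => hN n x F ?_ ?_
  · intro p hp
    obtain ⟨y, hy, rfl⟩ := hF hp
    exact (T.equivalence _).trans hy (T.rel_succ (T.rel_leader n y))
  · intro p hp p' hp' h
    obtain ⟨y, -, rfl⟩ := hF hp
    obtain ⟨y', -, rfl⟩ := hF hp'
    rwa [← T.leader_eq_iff, T.leader_leader, T.leader_leader] at h

theorem label_lt {N : ℕ → ℕ} (hN : T.BranchingBounded N) (n : ℕ) (x : X) :
    T.label n x < N n := by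
  obtain ⟨hfin, hcard⟩ := T.leaders_finite_ncard_le hN n x
  refine lt_of_lt_of_le (Set.ncard_lt_ncard ⟨Set.sep_subset _ _, fun h => ?_⟩ hfin) hcard
  exact lt_irrefl _ (h (T.leader_mem_leaders n x)).2

theorem label_eq_of_rel {n : ℕ} {x y : X} (h : T.rel n x y) : T.label n x = T.label n y := by
  rw [label, label, T.leaders_eq_of_rel (T.rel_succ h), T.leader_eq_iff.2 h]

theorem rel_of_rel_succ_of_label_eq {N : ℕ → ℕ} (hN : T.BranchingBounded N) {n : ℕ} {x y : X}
    (h : T.rel (n + 1) x y) (hl : T.label n x = T.label n y) : T.rel n x y := by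
  have hL := T.leaders_eq_of_rel h
  rw [label, label, ← hL] at hl
  have hrank := strictMonoOn_ncard_sep_lt (T.leaders_finite_ncard_le hN n x).1
  exact T.leader_eq_iff.1 <|
    hrank.injOn (T.leader_mem_leaders n x) (hL ▸ T.leader_mem_leaders n y) hl

theorem eventually_label_eq_zero (x : X) : ∀ᶠ n in atTop, T.label n x = 0 := by
  obtain ⟨K, hK⟩ := WellFoundedLT.antitone_chain_condition
    (antitone_nat_of_succ_le (f := (T.leader · x)) (T.leader_succ_le · x))
  filter_upwards [eventually_ge_atTop K] with n hn
  suffices {l ∈ T.leaders n x | l < T.leader n x} = ∅ by rw [label, this, Set.ncard_empty]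
  refine Set.eq_empty_iff_forall_notMem.2 ?_
  rintro _ ⟨⟨y, hy, rfl⟩, hlt⟩
  refine hlt.not_ge ?_
  calc T.leader n x = T.leader (n + 1) y :=
        ((hK n hn).symm.trans (hK (n + 1) (by omega))).trans (T.leader_eq_iff.2 hy)
    _ ≤ T.leader n y := T.leader_succ_le n y

theorem rel_iff_forall_label_eq {N : ℕ → ℕ} (hN : T.BranchingBounded N) {n : ℕ} {x y : X} :
    T.rel n x y ↔ ∀ j ≥ n, T.label j x = T.label j y := by
  refine ⟨fun h j hj => T.label_eq_of_rel (T.rel_mono hj h), fun h => ?_⟩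
  obtain ⟨K, hK⟩ := T.exists_rel x y
  suffices ∀ d, T.rel (n + d) x y → T.rel n x y from this K (T.rel_mono (by omega) hK)
  intro d
  induction d with
  | zero => exact id
  | succ d ih => exact fun hd => ih (T.rel_of_rel_succ_of_label_eq hN hd (h _ (by omega)))

end Leader

theorem exists_address {N : ℕ → ℕ} (hN : T.BranchingBounded N) :
    ∃ q : X → ℕ → ℕ, (∀ x j, q x j < N j) ∧ (∀ x, ∀ᶠ j in atTop, q x j = 0) ∧
      ∀ n x y, T.rel n x y ↔ ∀ j ≥ n, q x j = q y j := by
  obtain ⟨_, _⟩ := exists_wellFoundedLT X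
  exact ⟨fun x j => T.label j x, fun x j => T.label_lt hN j x, T.eventually_label_eq_zero,
    fun n x y => T.rel_iff_forall_label_eq hN⟩

end EquivTower

def chainTower (X : Type*) [MetricSpace X] {ε : ℝ} (hε : 0 < ε) : EquivTower X where
  rel n := Relation.ReflTransGen fun a b => dist a b < ε + n
  equivalence n := by
    have : Std.Symm fun a b : X => dist a b < ε + n := ⟨fun a b h => by rwa [dist_comm]⟩
    exact ⟨fun _ => .refl, Std.Symm.symm _ _, .trans⟩
  rel_succ {n x y} := Relation.ReflTransGen.mono (fun a b (h : dist a b < ε + n) =>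
    show dist a b < ε + ↑(n + 1) by push_cast; linarith) x y
  exists_rel x y := ⟨⌈dist x y⌉₊, .single (by linarith [Nat.le_ceil (dist x y)])⟩

theorem exists_address_of_boundedGeometry_of_asdimZero {X : Type*} [MetricSpace X]
    (hbg : BoundedGeometry X) (has : AsdimZero X) :
    ∃ (N : ℕ → ℕ) (q : X → ℕ → ℕ), (∀ x j, q x j < N j) ∧ (∀ x, ∀ᶠ j in atTop, q x j = 0) ∧
      (∀ R : ℝ, ∃ n, ∀ x y, dist x y ≤ R → ∀ j ≥ n, q x j = q y j) ∧
      ∀ n, ∃ B > 0, ∀ x y, (∀ j ≥ n, q x j = q y j) → dist x y ≤ B := by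
  obtain ⟨ε, hε, hbg⟩ := hbg
  let T := chainTower X hε
  choose B hB hBdiam using fun n : ℕ => has (ε + n) (by positivity)
  choose N hN using fun n : ℕ => hbg (B (n + 1) + 1) (by linarith [hB (n + 1)])
  have hT : T.BranchingBounded N := by
    refine fun n x F hxF hsep => hN n x F (fun p hp => ?_) fun p hp p' hp' hne => ?_
    · rw [Metric.mem_ball, dist_comm]
      linarith [hBdiam (n + 1) x p (hxF p hp)]
    · by_contra hlt
      exact hne (hsep p hp p' hp' (.single (by linarith [n.cast_nonneg (α := ℝ)])))
  obtain ⟨q, hqN, hq0, hq⟩ := T.exists_address hT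
  refine ⟨N, q, hqN, hq0, fun R => ⟨⌈R⌉₊, fun x y hxy => (hq _ x y).1 (.single ?_)⟩,
    fun n => ⟨B n, hB n, fun x y h => hBdiam n x y ((hq n x y).2 h)⟩⟩
  linarith [Nat.le_ceil R]

theorem exists_coarseEmbedding_of_dist_le_succ_iff {G : Type*} [Group G] [MetricSpace G]
    {Gs : ℕ → Subgroup G} (hmono : StrictMono Gs) (hfin : ∀ i, (Gs i : Set G).Finite)
    (hdist : ∀ (k : ℕ) (x y : G), dist x y ≤ k + 1 ↔ x⁻¹ * y ∈ Gs k)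
    {X : Type*} [MetricSpace X] (hbg : BoundedGeometry X) (has : AsdimZero X) :
    ∃ f : X → G, CoarseEmbedding f := by
  obtain ⟨N, q, hqN, hq0, hq_of_dist, hdist_of_q⟩ :=
    exists_address_of_boundedGeometry_of_asdimZero hbg has
  obtain ⟨m, hm, φ, hφ⟩ := exists_addressMap hmono hfin N
  have hφq (x y : X) (n : ℕ) := hφ (q x) (q y) (hqN x) (hqN y) (hq0 x) (hq0 y) n
  refine ⟨fun x => φ (q x), fun R _ => ?_, fun R _ => ?_⟩
  · obtain ⟨n, hn⟩ := hq_of_dist R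
    exact ⟨m n + 1, by positivity,
      fun x y hxy => (hdist _ _ _).2 ((hφq x y n).2 (hn x y hxy))⟩
  · obtain ⟨B, hB, hBq⟩ := hdist_of_q ⌈R⌉₊
    refine ⟨B, hB, fun x y hxy => hBq x y ((hφq x y _).1 ?_)⟩
    refine hmono.monotone hm.le_apply ((hdist _ _ _).1 ?_)
    linarith [Nat.le_ceil R]

theorem universal_group_for_bounded_geometry_asdim_zero_general {G : Type*} [Group G]
    (Gs : ℕ → Subgroup G) (hmono : StrictMono Gs)
    (hfin : ∀ i : ℕ, (Gs i : Set G).Finite)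
    (hunion : ∀ g : G, ∃ i : ℕ, g ∈ Gs i) :
    ∃ _ : MetricSpace G, LeftInvariantDist G ∧ IsUltra G ∧ IsIntegralDist G ∧
      ProperSpace G ∧
      ∀ (X : Type u) (_ : MetricSpace X), BoundedGeometry X →
        AsdimZero X → ∃ f : X → G, CoarseEmbedding f := by
  let _ := chainMetricSpace hmono.monotone hunion
  exact ⟨‹_›,
    leftInvariantDist_chainMetricSpace hmono.monotone hunion,
    isUltra_chainMetricSpace hmono.monotone hunion,
    isIntegralDist_chainMetricSpace hmono.monotone hunion,
    properSpace_chainMetricSpace hmono.monotone hunion hfin,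
    fun _ _ hbg has => exists_coarseEmbedding_of_dist_le_succ_iff hmono hfin
      (chainMetricSpace_dist_le_succ_iff hmono.monotone hunion) hbg has⟩

/-- Theorem 6.9: if `G` is a countable group that is the union of a strictly increasing
sequence of finite subgroups `Gs i`, then `G` carries a proper left-invariant integral
ultrametric making it a universal space in the category of metric spaces of bounded geometry
of asymptotic dimension `0`. -/
theorem universal_group_for_bounded_geometry_asdim_zero {G : Type*} [Group G] [Countable G]
    (Gs : ℕ → Subgroup G) (hmono : StrictMono Gs)
    (hfin : ∀ i : ℕ, (Gs i : Set G).Finite)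
    (hunion : ∀ g : G, ∃ i : ℕ, g ∈ Gs i) :
    ∃ _ : MetricSpace G, LeftInvariantDist G ∧ IsUltra G ∧ IsIntegralDist G ∧
      ProperSpace G ∧
      ∀ (X : Type u) (_ : MetricSpace X), BoundedGeometry X →
        AsdimZero X → ∃ f : X → G, CoarseEmbedding f :=
  universal_group_for_bounded_geometry_asdim_zero_general Gs hmono hfin hunion
end
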